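/- arXiv:2503.14180 — 4 statements merged into one kernel-verified Lean document; each statement's English description precedes it below -/
import Mathlib

section
/- For every positive integer n, the matrix Z_n is symmetric and positive definite; in particular all eigenvalues of Z_n are strictly positive. -/
open Matrix

/-- The `n×n` matrix `Z_n` (1-based indices `i' = i+1`, `j' = j+1`). -/
noncomputable def Z (n : ℕ) : Matrix (Fin n) (Fin n) ℝ := fun i j =>
  if i = j then
    1 + ∑ k ∈ Finset.Icc (i.1 + 2) n, ((Nat.fib (k - (i.1 + 1)) : ℝ)) ^ 2
  else if i < j then
    (-1 : ℝ) ^ (j.1 - i.1) * ((Nat.fib (j.1 - i.1) : ℝ) +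
      ∑ k ∈ Finset.Icc (j.1 + 2) n,
        (Nat.fib (k - (i.1 + 1)) : ℝ) * (Nat.fib (k - (j.1 + 1)) : ℝ))
  else
    (-1 : ℝ) ^ (i.1 - j.1) * ((Nat.fib (i.1 - j.1) : ℝ) +
      ∑ k ∈ Finset.Icc (i.1 + 2) n,
        (Nat.fib (k - (i.1 + 1)) : ℝ) * (Nat.fib (k - (j.1 + 1)) : ℝ))

/-- `μ` is an eigenvalue of the real matrix `M`. -/
def HasEigen {n : ℕ} (M : Matrix (Fin n) (Fin n) ℝ) (μ : ℝ) : Prop :=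
  ∃ v : Fin n → ℝ, v ≠ 0 ∧ M.mulVec v = μ • v

/-- The unit lower-triangular Cholesky-type factor of `Z n`. -/
noncomputable def Lm (n : ℕ) : Matrix (Fin n) (Fin n) ℝ := fun k j =>
  if (j : ℕ) = k then 1
  else if (j : ℕ) < k then (-1 : ℝ) ^ (k.1 - j.1) * Nat.fib (k.1 - j.1)
  else 0

lemma shift_sum (a n : ℕ) (F : ℕ → ℝ) :
    ∑ m ∈ Finset.Icc (a + 1) n, F m = ∑ k ∈ Finset.Ico a n, F (k + 1) := by
  rw [← Finset.Ico_add_one_right_eq_Icc, show a + 1 = 1 + a by ring, show n + 1 = 1 + n by omega,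
    ← Finset.map_add_left_Ico, Finset.sum_map]
  simp [addLeftEmbedding, add_comm]

lemma key (n : ℕ) (i j : Fin n) (hij : (i : ℕ) ≤ j) :
    ∑ k : Fin n, Lm n k i * Lm n k j
      = (-1 : ℝ) ^ (j.1 - i.1) *
        ((if i = j then (1 : ℝ) else (Nat.fib (j.1 - i.1) : ℝ)) +
          ∑ m ∈ Finset.Icc (j.1 + 2) n,
            (Nat.fib (m - (i.1 + 1)) : ℝ) * (Nat.fib (m - (j.1 + 1)) : ℝ)) := by
  classical
  set G : ℕ → ℝ := fun k =>
    (if (i : ℕ) = k then (1 : ℝ)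
      else if (i : ℕ) < k then (-1 : ℝ) ^ (k - i.1) * Nat.fib (k - i.1) else 0) *
    (if (j : ℕ) = k then (1 : ℝ)
      else if (j : ℕ) < k then (-1 : ℝ) ^ (k - j.1) * Nat.fib (k - j.1) else 0) with hG
  have h1 : ∑ k : Fin n, Lm n k i * Lm n k j = ∑ k ∈ Finset.range n, G k := by
    rw [← Fin.sum_univ_eq_sum_range]
    rfl
  have h2 : ∑ k ∈ Finset.range n, G k = ∑ k ∈ Finset.Ico j.1 n, G k := by
    refine (Finset.sum_subset ?_ ?_).symm
    · intro k hk
      simp only [Finset.mem_Ico] at hk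
      simp [hk.2]
    · intro k hk hk'
      simp only [Finset.mem_range] at hk
      simp only [Finset.mem_Ico] at hk'
      simp only [hG]
      rw [if_neg (by omega : ¬ ((j : ℕ) = k)), if_neg (by omega : ¬ ((j : ℕ) < k)), mul_zero]
  have h3 : ∑ k ∈ Finset.Ico j.1 n, G k = G j.1 + ∑ k ∈ Finset.Ico (j.1 + 1) n, G k :=
    Finset.sum_eq_sum_Ico_succ_bot j.2 G
  have h4 : G j.1 = (-1 : ℝ) ^ (j.1 - i.1) *
      (if i = j then (1 : ℝ) else (Nat.fib (j.1 - i.1) : ℝ)) := by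
    by_cases h : i = j
    · subst h; simp [hG]
    · have hij' : (i : ℕ) < j := lt_of_le_of_ne hij (by
        intro hc; exact h (Fin.ext hc))
      simp only [hG]
      rw [if_neg (by omega : ¬ ((i : ℕ) = j.1)), if_pos hij']
      simp [h]
  have h5 : ∀ k ∈ Finset.Ico (j.1 + 1) n, G k =
      (-1 : ℝ) ^ (j.1 - i.1) * ((Nat.fib (k - i.1) : ℝ) * (Nat.fib (k - j.1) : ℝ)) := by
    intro k hk
    simp only [Finset.mem_Ico] at hk
    have hik : (i : ℕ) < k := by omega
    have hjk : (j : ℕ) < k := by omega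
    simp only [hG]
    rw [if_neg (by omega), if_pos hik, if_neg (by omega), if_pos hjk]
    have hsplit : k - i.1 = (k - j.1) + (j.1 - i.1) := by omega
    rw [hsplit, pow_add]
    have hsq : ((-1 : ℝ) ^ (k - j.1)) * ((-1 : ℝ) ^ (k - j.1)) = 1 := by
      rw [← pow_add]; exact Even.neg_one_pow ⟨k - j.1, rfl⟩
    push_cast [hsplit]
    linear_combination ((Nat.fib (k - j.1 + (j.1 - i.1)) : ℝ) * (Nat.fib (k - j.1) : ℝ) *
      (-1 : ℝ) ^ (j.1 - i.1)) * hsq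
  have h6 : ∑ m ∈ Finset.Icc (j.1 + 2) n,
      (Nat.fib (m - (i.1 + 1)) : ℝ) * (Nat.fib (m - (j.1 + 1)) : ℝ)
      = ∑ k ∈ Finset.Ico (j.1 + 1) n, (Nat.fib (k - i.1) : ℝ) * (Nat.fib (k - j.1) : ℝ) := by
    rw [shift_sum (j.1 + 1) n]
    refine Finset.sum_congr rfl fun k _ => ?_
    rw [Nat.succ_sub_succ, Nat.succ_sub_succ]
  rw [h1, h2, h3, h4, Finset.sum_congr rfl h5, ← Finset.mul_sum, ← h6]
  ring

lemma Z_eq (n : ℕ) : Z n = (Lm n)ᵀ * Lm n := by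
  ext i j
  rw [Matrix.mul_apply]
  simp only [Matrix.transpose_apply]
  rcases lt_trichotomy i j with h | h | h
  · have hij : (i : ℕ) ≤ j := le_of_lt h
    rw [key n i j hij]
    rw [Z, if_neg (ne_of_lt h), if_pos h, if_neg (ne_of_lt h)]
  · subst h
    rw [key n i i le_rfl]
    simp [Z, sq]
  · have hji : (j : ℕ) ≤ i := le_of_lt h
    have : ∑ k : Fin n, Lm n k i * Lm n k j = ∑ k : Fin n, Lm n k j * Lm n k i := by
      refine Finset.sum_congr rfl fun k _ => mul_comm _ _
    rw [this, key n j i hji]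
    rw [Z, if_neg (ne_of_gt h), if_neg (not_lt_of_gt h), if_neg (by
      intro hc; exact absurd hc.symm (ne_of_gt h))]
    refine congrArg ((-1 : ℝ) ^ (i.1 - j.1) * ·) ?_
    refine congrArg _ (Finset.sum_congr rfl fun m _ => mul_comm _ _)

lemma Lm_det (n : ℕ) : (Lm n).det = 1 := by
  rw [Matrix.det_of_lowerTriangular (Lm n)
    (by
      intro a b hab
      have : (a : ℕ) < b := hab
      rw [Lm, if_neg (by omega), if_neg (by omega)])]
  simp [Lm]

theorem stmt_2 (n : ℕ) (hn : 0 < n) :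
    (Z n).IsSymm ∧ (Z n).PosDef ∧ ∀ μ : ℝ, HasEigen (Z n) μ → 0 < μ := by
  have hsymm : (Z n).IsSymm := by
    rw [Z_eq]; exact Matrix.isSymm_transpose_mul_self (Lm n)
  have hinj : Function.Injective (Lm n).mulVec := by
    rw [Matrix.mulVec_injective_iff_isUnit, Matrix.isUnit_iff_isUnit_det, Lm_det]
    exact isUnit_one
  have hpd : (Z n).PosDef := by
    rw [Matrix.posDef_iff_dotProduct_mulVec]
    constructor
    · rw [Matrix.IsHermitian, Matrix.conjTranspose_eq_transpose_of_trivial]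
      exact hsymm
    · intro x hx
      have hLx : (Lm n).mulVec x ≠ 0 := fun hc => hx (hinj (by
        rw [hc, Matrix.mulVec_zero]))
      have : star x ⬝ᵥ (Z n).mulVec x =
          ((Lm n).mulVec x) ⬝ᵥ ((Lm n).mulVec x) := by
        rw [Z_eq, ← Matrix.mulVec_mulVec, Matrix.dotProduct_mulVec,
          Matrix.vecMul_transpose]
        simp
      rw [this]
      have := dotProduct_self_eq_zero (v := (Lm n).mulVec x)
      have hnn : 0 ≤ ((Lm n).mulVec x) ⬝ᵥ ((Lm n).mulVec x) :=
        Finset.sum_nonneg fun k _ => mul_self_nonneg _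
      rcases hnn.lt_or_eq with hlt | heq
      · exact hlt
      · exact absurd (dotProduct_self_eq_zero.mp heq.symm) hLx
  refine ⟨hsymm, hpd, ?_⟩
  rintro μ ⟨v, hv, hEig⟩
  have hpos : 0 < star v ⬝ᵥ (Z n).mulVec v := hpd.dotProduct_mulVec_pos hv
  rw [hEig] at hpos
  have hvv : 0 < v ⬝ᵥ v := by
    have hnn : 0 ≤ v ⬝ᵥ v := Finset.sum_nonneg fun k _ => mul_self_nonneg _
    rcases hnn.lt_or_eq with hlt | heq
    · exact hlt
    · exact absurd (dotProduct_self_eq_zero.mp heq.symm) hv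
  have : star v ⬝ᵥ (μ • v) = μ * (v ⬝ᵥ v) := by
    simp [dotProduct_smul, star]
  rw [this] at hpos
  nlinarith [hpos, hvv]
end

section
/- For every positive integer n, the Frobenius norm of Z_n satisfies ‖Z_n‖_F² = (1/25)φ^{-4n} + ((3+(−1)^n)/25)φ^{-2n} − (2/(5√5)) n φ^{-2n} + (13(−1)^n − 33)/50 + n + ((3+(−1)^n)/25)φ^{2n} + (2/(5√5)) n φ^{2n} + (1/25)φ^{4n}, where φ = (1+√5)/2 is the golden ratio. -/
open Matrix

/-- The squared Frobenius norm: the sum of the squares of all entries. -/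
noncomputable def frobSq {n : ℕ} (M : Matrix (Fin n) (Fin n) ℝ) : ℝ :=
  ∑ i, ∑ j, (M i j) ^ 2

/-- The golden ratio `φ = (1 + √5)/2`. -/
noncomputable def φ : ℝ := (1 + Real.sqrt 5) / 2


noncomputable def fr (k : ℕ) : ℝ := Nat.fib k

lemma fr_add_two (k : ℕ) : fr (k+2) = fr (k+1) + fr k := by
  simp [fr, Nat.fib_add_two]; ring

lemma fr_zero : fr 0 = 0 := by simp [fr]
lemma fr_one : fr 1 = 1 := by simp [fr]

lemma cassini (k : ℕ) : fr (k+1)^2 - fr (k+1) * fr k - fr k ^2 = (-1)^k := by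
  induction k with
  | zero => simp [fr]
  | succ k ih =>
    rw [fr_add_two, pow_succ]
    linear_combination -ih

lemma fr_two_mul_add_one (k : ℕ) : fr (2*k+1) = fr (k+1)^2 + fr k^2 := by
  simp [fr, Nat.fib_two_mul_add_one]

lemma fr_two_mul (k : ℕ) : fr (2*k) = 2 * fr k * fr (k+1) - fr k ^2 := by
  have h : Nat.fib k ≤ 2 * Nat.fib (k+1) := by
    have := Nat.fib_le_fib_succ (n := k); omega
  simp only [fr, Nat.fib_two_mul]
  push_cast [Nat.cast_sub h]
  ring

open Finset in
lemma key_sum (d N : ℕ) :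
    fr d + ∑ t ∈ Finset.Icc 1 N, fr (t+d) * fr t =
      if Even N then fr (N+d) * fr (N+1) else fr (N+d+1) * fr N := by
  induction N with
  | zero => simp [fr]
  | succ N ih =>
    rw [Finset.sum_Icc_succ_top (by omega), ← add_assoc, ih]
    rcases Nat.even_or_odd N with h | h
    · rw [if_pos h, if_neg (by simp [Nat.even_add_one, h])]
      rw [show N+1+d+1 = (N+d)+2 from by omega, fr_add_two,
        show N+1+d = N+d+1 from by omega]
      ring
    · have h' : ¬ Even N := Nat.not_even_iff_odd.mpr h
      rw [if_neg h', if_pos (by simp [Nat.even_add_one, h'])]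
      rw [show N+1+d = (N+d+1) from by omega, show N+1+1 = N+2 from rfl, fr_add_two]
      ring

open Finset in
lemma reindex_Icc (m n : ℕ) (hmn : m ≤ n) (f : ℕ → ℝ) :
    ∑ k ∈ Finset.Icc (m+1) n, f k = ∑ t ∈ Finset.Icc 1 (n-m), f (m+t) := by
  rw [show Finset.Icc (m+1) n = Finset.Icc (m+1) (m + (n-m)) from by rw [show m + (n-m) = n from by omega],
    ← Finset.map_add_left_Icc, Finset.sum_map]
  simp [addLeftEmbedding_apply]

open Finset in
lemma shift_Icc (c n : ℕ) (f : ℕ → ℝ) :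
    ∑ k ∈ Finset.Icc (c+1) (n+1), f k = ∑ k ∈ Finset.Icc c n, f (k+1) := by
  rw [show Finset.Icc (c+1) (n+1) = Finset.Icc (c+1) (n+1) from rfl, ← Finset.map_add_right_Icc,
    Finset.sum_map]
  simp [addRightEmbedding_apply]

lemma Zsymm (n : ℕ) (i j : Fin n) : Z n i j = Z n j i := by
  rcases lt_trichotomy i j with h | h | h
  · have hne : i ≠ j := ne_of_lt h
    simp only [Z, if_neg hne, if_pos h, if_neg hne.symm, if_neg (asymm h)]
    have : ∀ S : Finset ℕ, ∀ f g : ℕ → ℝ, ∑ k ∈ S, f k * g k = ∑ k ∈ S, g k * f k :=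
      fun S f g => Finset.sum_congr rfl fun k _ => mul_comm _ _
    rw [this]
  · subst h; rfl
  · have hne : i ≠ j := ne_of_gt h
    simp only [Z, if_neg hne, if_neg (asymm h), if_neg hne.symm, if_pos h]
    have : ∀ S : Finset ℕ, ∀ f g : ℕ → ℝ, ∑ k ∈ S, f k * g k = ∑ k ∈ S, g k * f k :=
      fun S f g => Finset.sum_congr rfl fun k _ => mul_comm _ _
    rw [this]

open Finset in
lemma shift_Icc' (c n : ℕ) (f : ℕ → ℝ) :
    ∑ k ∈ Finset.Icc (c+1) (n+1), f k = ∑ k ∈ Finset.Icc c n, f (k+1) := by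
  rw [show Finset.Icc (c+1) (n+1) = Finset.Icc (c+1) (n+1) from rfl, ← Finset.map_add_right_Icc,
    Finset.sum_map]
  simp [addRightEmbedding_apply]

lemma Zblock (n : ℕ) (i j : Fin n) : Z (n+1) i.succ j.succ = Z n i j := by
  rcases lt_trichotomy i j with h | h | h
  · have hne : i ≠ j := ne_of_lt h
    have hne2 : i.succ ≠ j.succ := by simpa [Fin.succ_inj] using hne
    have h2 : i.succ < j.succ := by simpa [Fin.succ_lt_succ_iff] using h
    simp only [Z, if_neg hne, if_pos h, if_neg hne2, if_pos h2, Fin.val_succ]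
    rw [show (j.1+1) - (i.1+1) = j.1 - i.1 from by omega,
      show j.1+1+2 = (j.1+2)+1 from by omega, shift_Icc']
    refine congrArg _ (congrArg (fun x : ℝ => _ + x) ?_)
    refine Finset.sum_congr rfl fun k _ => ?_
    rw [show k+1 - (i.1+1+1) = k - (i.1+1) from by omega,
      show k+1 - (j.1+1+1) = k - (j.1+1) from by omega]
  · subst h
    simp only [Z, if_pos rfl, Fin.val_succ]
    rw [show (i.1+1)+2 = (i.1+2)+1 from by omega, shift_Icc']
    refine congrArg (fun x : ℝ => 1 + x) ?_
    refine Finset.sum_congr rfl fun k _ => ?_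
    rw [show k+1 - (i.1+1+1) = k - (i.1+1) from by omega]
  · have hne : i ≠ j := ne_of_gt h
    have hne2 : i.succ ≠ j.succ := by simpa [Fin.succ_inj] using hne
    have h2 : ¬ i.succ < j.succ := by simpa [Fin.succ_lt_succ_iff] using asymm h
    simp only [Z, if_neg hne, if_neg (asymm h), if_neg hne2, if_neg h2, Fin.val_succ]
    rw [show (i.1+1) - (j.1+1) = i.1 - j.1 from by omega,
      show i.1+1+2 = (i.1+2)+1 from by omega, shift_Icc']
    refine congrArg _ (congrArg (fun x : ℝ => _ + x) ?_)
    refine Finset.sum_congr rfl fun k _ => ?_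
    rw [show k+1 - (i.1+1+1) = k - (i.1+1) from by omega,
      show k+1 - (j.1+1+1) = k - (j.1+1) from by omega]


lemma sum_fib_sq (n : ℕ) : ∑ t ∈ Finset.Icc 1 n, fr t ^ 2 = fr n * fr (n+1) := by
  have h := key_sum 0 n
  rw [fr_zero, zero_add] at h
  have h2 : ∑ t ∈ Finset.Icc 1 n, fr t ^ 2 = ∑ t ∈ Finset.Icc 1 n, fr (t+0) * fr t := by
    refine Finset.sum_congr rfl fun t _ => by rw [Nat.add_zero]; ring
  rw [h2, h]
  split_ifs with he
  · rw [Nat.add_zero]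
  · rw [Nat.add_zero, mul_comm]

lemma Z00 (n : ℕ) : Z (n+1) (0 : Fin (n+1)) 0 = 1 + fr n * fr (n+1) := by
  simp only [Z, if_pos rfl, Fin.val_zero]
  rw [show (0:ℕ)+2 = 1+1 from rfl, reindex_Icc 1 (n+1) (by omega)]
  rw [show (n+1)-1 = n from by omega]
  have h2 : ∑ t ∈ Finset.Icc 1 n, ((Nat.fib (1 + t - (0+1)) : ℝ))^2
      = ∑ t ∈ Finset.Icc 1 n, fr t ^ 2 := by
    refine Finset.sum_congr rfl fun t _ => by
      rw [show 1 + t - (0+1) = t from by omega]; rfl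
  rw [h2, sum_fib_sq]
  simp

lemma sq_negpow (e : ℕ) (A : ℝ) : ((-1:ℝ)^e * A)^2 = A^2 := by
  rw [mul_pow, ← pow_mul, mul_comm e 2, pow_mul]
  norm_num

lemma Zrow (n : ℕ) (j : Fin n) :
    (Z (n+1) (0 : Fin (n+1)) j.succ)^2 =
      (if Even (n - 1 - j.1) then fr n * fr ((n - 1 - j.1)+1)
        else fr (n+1) * fr (n - 1 - j.1))^2 := by
  have h0 : (0 : Fin (n+1)) ≠ j.succ := (Fin.succ_ne_zero j).symm
  have hlt : (0 : Fin (n+1)) < j.succ := Fin.succ_pos j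
  have hne0 : ¬ ((0 : Fin (n+1)) = j.succ) := h0
  simp only [Z, if_neg hne0, if_pos hlt, Fin.val_succ, Fin.val_zero]
  rw [sq_negpow]
  rw [show j.1+1+2 = (j.1+2)+1 from by omega,
    reindex_Icc (j.1+2) (n+1) (by omega),
    show (n+1)-(j.1+2) = n-1-j.1 from by omega]
  have h2 : ∑ t ∈ Finset.Icc 1 (n-1-j.1),
      ((Nat.fib (j.1+2+t - (0+1)) : ℝ)) * (Nat.fib (j.1+2+t - (j.1+1+1)) : ℝ)
      = ∑ t ∈ Finset.Icc 1 (n-1-j.1), fr (t + (j.1+1)) * fr t := by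
    refine Finset.sum_congr rfl fun t _ => by
      rw [show j.1+2+t - (0+1) = t + (j.1+1) from by omega,
        show j.1+2+t - (j.1+1+1) = t from by omega]; rfl
  rw [show j.1+1-0 = j.1+1 from by omega, h2]
  have h3 : (Nat.fib (j.1+1) : ℝ) = fr (j.1+1) := rfl
  rw [h3, key_sum (j.1+1) (n-1-j.1)]
  have hj := j.isLt
  rw [show (n-1-j.1) + (j.1+1) = n from by omega]


noncomputable def Asum (n : ℕ) : ℝ :=
  ∑ u ∈ Finset.range n, if Even u then fr (u+1)^2 else 0
noncomputable def Bsum (n : ℕ) : ℝ :=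
  ∑ u ∈ Finset.range n, if Even u then 0 else fr u ^2

noncomputable def Gfun (n : ℕ) (u : ℕ) : ℝ :=
  (fr n)^2 * (if Even u then fr (u+1)^2 else 0) + (fr (n+1))^2 * (if Even u then 0 else fr u ^2)

lemma Gfun_eq (n u : ℕ) :
    (if Even u then fr n * fr (u+1) else fr (n+1) * fr u)^2 = Gfun n u := by
  unfold Gfun
  split_ifs with h <;> ring

lemma row_sum (n : ℕ) :
    ∑ j : Fin (n+1), (Z (n+1) 0 j)^2
      = (1 + fr n * fr (n+1))^2 + ((fr n)^2 * Asum n + (fr (n+1))^2 * Bsum n) := by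
  rw [Fin.sum_univ_succ, Z00]
  congr 1
  calc ∑ j : Fin n, (Z (n+1) 0 j.succ)^2
      = ∑ j : Fin n, Gfun n (n-1-j.1) :=
        Finset.sum_congr rfl fun j _ => by rw [Zrow, Gfun_eq]
    _ = ∑ u ∈ Finset.range n, Gfun n (n-1-u) :=
        Fin.sum_univ_eq_sum_range (fun u => Gfun n (n-1-u)) n
    _ = ∑ u ∈ Finset.range n, Gfun n u := Finset.sum_range_reflect (Gfun n) n
    _ = (fr n)^2 * Asum n + (fr (n+1))^2 * Bsum n := by
        unfold Gfun Asum Bsum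
        rw [Finset.sum_add_distrib, ← Finset.mul_sum, ← Finset.mul_sum]

lemma frob_rec (n : ℕ) : frobSq (Z (n+1)) = frobSq (Z n) + (1 + fr n * fr (n+1))^2
    + 2 * ((fr n)^2 * Asum n + (fr (n+1))^2 * Bsum n) := by
  have key : frobSq (Z (n+1)) = frobSq (Z n)
      + 2 * (∑ j : Fin (n+1), (Z (n+1) 0 j)^2) - (Z (n+1) 0 0)^2 := by
    unfold frobSq
    rw [Fin.sum_univ_succ]
    have h1 : ∀ i : Fin n, ∑ j : Fin (n+1), (Z (n+1) i.succ j)^2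
        = (Z (n+1) 0 i.succ)^2 + ∑ j : Fin n, (Z n i j)^2 := by
      intro i
      rw [Fin.sum_univ_succ, Zsymm]
      congr 1
      exact Finset.sum_congr rfl fun j _ => by rw [Zblock]
    rw [Finset.sum_congr rfl (fun i _ => h1 i), Finset.sum_add_distrib]
    have h2 : ∑ j : Fin (n+1), (Z (n+1) 0 j)^2
        = (Z (n+1) 0 0)^2 + ∑ i : Fin n, (Z (n+1) 0 i.succ)^2 := Fin.sum_univ_succ _
    rw [h2]
    ring
  rw [key, row_sum, Z00]
  ring


lemma cassini_even (t : ℕ) : fr (2*t+1)^2 - fr (2*t+1) * fr (2*t) - fr (2*t)^2 = 1 := by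
  have h := cassini (2*t)
  rw [pow_mul] at h
  norm_num at h
  exact h

lemma csum (t : ℕ) : 5 * (∑ k ∈ Finset.range t, fr (2*k+1)^2) = fr (4*t) + 2*t := by
  induction t with
  | zero => simp [fr]
  | succ t ih =>
    rw [Finset.sum_range_succ]
    have hc := cassini_even t
    have h4 : fr (4*(t+1)) = 2 * fr (2*t+2) * fr (2*t+3) - fr (2*t+2)^2 := by
      rw [show 4*(t+1) = 2*(2*t+2) from by ring, fr_two_mul,
        show 2*t+2+1 = 2*t+3 from rfl]
    have h40 : fr (4*t) = 2 * fr (2*t) * fr (2*t+1) - fr (2*t)^2 := by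
      rw [show 4*t = 2*(2*t) from by ring, fr_two_mul, show 2*t+1 = 2*t+1 from rfl]
    have e3 : fr (2*t+3) = fr (2*t+2) + fr (2*t+1) := fr_add_two (2*t+1)
    have e2 : fr (2*t+2) = fr (2*t+1) + fr (2*t) := fr_add_two (2*t)
    rw [h4, e3, e2]
    rw [h40] at ih
    push_cast
    linear_combination ih + 2*hc

lemma AB_even (t : ℕ) : Asum (2*t) = ∑ k ∈ Finset.range t, fr (2*k+1)^2
    ∧ Bsum (2*t) = ∑ k ∈ Finset.range t, fr (2*k+1)^2 := by
  induction t with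
  | zero => constructor <;> simp [Asum, Bsum]
  | succ t ih =>
    obtain ⟨hA, hB⟩ := ih
    have he : Even (2*t) := ⟨t, by ring⟩
    have ho : ¬ Even (2*t+1) := by simp [Nat.even_add_one, he]
    constructor
    · unfold Asum at hA ⊢
      rw [show 2*(t+1) = (2*t+1)+1 from by ring, Finset.sum_range_succ,
        Finset.sum_range_succ, hA, if_pos he, if_neg ho, Finset.sum_range_succ]
      ring
    · unfold Bsum at hB ⊢
      rw [show 2*(t+1) = (2*t+1)+1 from by ring, Finset.sum_range_succ,
        Finset.sum_range_succ, hB, if_pos he, if_neg ho, Finset.sum_range_succ]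
      ring

lemma hA_even (t : ℕ) : 5 * Asum (2*t) = fr (4*t) + 2*t := by
  rw [(AB_even t).1, csum]
lemma hB_even (t : ℕ) : 5 * Bsum (2*t) = fr (4*t) + 2*t := by
  rw [(AB_even t).2, csum]
lemma hA_odd (t : ℕ) : 5 * Asum (2*t+1) = fr (4*t+4) + 2*(t+1) := by
  have he : Even (2*t) := ⟨t, by ring⟩
  unfold Asum
  rw [Finset.sum_range_succ, if_pos he]
  have h1 := csum (t+1)
  rw [Finset.sum_range_succ, show 4*(t+1) = 4*t+4 from by ring] at h1
  have h2 := (AB_even t).1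
  unfold Asum at h2
  rw [h2]
  push_cast at h1 ⊢
  linear_combination h1
lemma hB_odd (t : ℕ) : 5 * Bsum (2*t+1) = fr (4*t) + 2*t := by
  have he : Even (2*t) := ⟨t, by ring⟩
  unfold Bsum
  rw [Finset.sum_range_succ, if_pos he]
  rw [add_zero]
  have := (AB_even t).2
  unfold Bsum at this
  rw [this, csum]


lemma mainfib (m : ℕ) : 50 * frobSq (Z (m+1)) =
    2*(2*fr (4*m+5) - fr (4*m+4)) + 2*(3+(-1:ℝ)^(m+1))*(2*fr (2*m+3) - fr (2*m+2))
    + 20*((m:ℝ)+1)*fr (2*m+2) + 50*((m:ℝ)+1) + 13*(-1:ℝ)^(m+1) - 33 := by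
  induction m with
  | zero =>
    have hz : frobSq (Z 1) = 1 := by
      norm_num [frobSq, Z, Fin.sum_univ_one, show Finset.Icc 2 1 = (∅ : Finset ℕ) from by decide]
    rw [hz]
    norm_num [fr, show Nat.fib 5 = 5 from by decide, show Nat.fib 4 = 3 from by decide,
      show Nat.fib 3 = 2 from by decide, show Nat.fib 2 = 1 from by decide]
  | succ m ih =>
    have hrec := frob_rec (m+1)
    rw [hrec]
    rcases Nat.even_or_odd m with ⟨t, ht⟩ | ⟨t, ht⟩
    · -- m = 2*t
      have ht' : m = 2*t := by omega
      subst ht'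
      rw [show (2*t+1+1 : ℕ) = 2*t+2 from by ring] at *
      rw [show 4*(2*t+1)+5 = 8*t+9 from by ring, show 4*(2*t+1)+4 = 8*t+8 from by ring,
        show 2*(2*t+1)+3 = 4*t+5 from by ring, show 2*(2*t+1)+2 = 4*t+4 from by ring]
      rw [show 4*(2*t)+5 = 8*t+5 from by ring, show 4*(2*t)+4 = 8*t+4 from by ring,
        show 2*(2*t)+3 = 4*t+3 from by ring, show 2*(2*t)+2 = 4*t+2 from by ring] at ih
      have he1 : ((-1:ℝ))^(2*t+1) = -1 := by
        rw [pow_succ, pow_mul]; norm_num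
      have he2 : ((-1:ℝ))^(2*t+2) = 1 := by
        rw [show 2*t+2 = 2*(t+1) from by ring, pow_mul]; norm_num
      rw [he1] at ih
      rw [he2]
      have hA := hA_odd t
      have hB := hB_odd t
      have hCas := cassini (2*t+1)
      rw [he1] at hCas
      have hq2 : fr (2*t+3) = fr (2*t+2) + fr (2*t+1) := fr_add_two (2*t+1)
      have h2t : fr (2*t) = fr (2*t+2) - fr (2*t+1) := by
        have := fr_add_two (2*t); linarith
      have d42 : fr (4*t+2) = 2*fr (2*t+1)*fr (2*t+2) - fr (2*t+1)^2 := by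
        rw [show 4*t+2 = 2*(2*t+1) from by ring, fr_two_mul]
      have d43 : fr (4*t+3) = fr (2*t+2)^2 + fr (2*t+1)^2 := by
        rw [show 4*t+3 = 2*(2*t+1)+1 from by ring, fr_two_mul_add_one]
      have d44 : fr (4*t+4) = 2*fr (2*t+2)*fr (2*t+3) - fr (2*t+2)^2 := by
        rw [show 4*t+4 = 2*(2*t+2) from by ring, fr_two_mul]
      have d45 : fr (4*t+5) = fr (2*t+3)^2 + fr (2*t+2)^2 := by
        rw [show 4*t+5 = 2*(2*t+2)+1 from by ring, fr_two_mul_add_one]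
      have d40 : fr (4*t) = 2*fr (2*t)*fr (2*t+1) - fr (2*t)^2 := by
        rw [show 4*t = 2*(2*t) from by ring, fr_two_mul]
      have d84 : fr (8*t+4) = 2*fr (4*t+2)*fr (4*t+3) - fr (4*t+2)^2 := by
        rw [show 8*t+4 = 2*(4*t+2) from by ring, fr_two_mul]
      have d85 : fr (8*t+5) = fr (4*t+3)^2 + fr (4*t+2)^2 := by
        rw [show 8*t+5 = 2*(4*t+2)+1 from by ring, fr_two_mul_add_one]
      have d88 : fr (8*t+8) = 2*fr (4*t+4)*fr (4*t+5) - fr (4*t+4)^2 := by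
        rw [show 8*t+8 = 2*(4*t+4) from by ring, fr_two_mul]
      have d89 : fr (8*t+9) = fr (4*t+5)^2 + fr (4*t+4)^2 := by
        rw [show 8*t+9 = 2*(4*t+4)+1 from by ring, fr_two_mul_add_one]
      rw [d89, d88, d45, d44, hq2]
      rw [d85, d84, d43, d42] at ih
      rw [d44, hq2] at hA
      rw [d40, h2t] at hB
      push_cast at ih hA hB ⊢
      linear_combination ih + 20*fr (2*t+1)^2 * hA + 20*fr (2*t+2)^2 * hB
        - (26 + 30*fr (2*t+2)^2 - 10*fr (2*t+1)*fr (2*t+2) + 10*fr (2*t+1)^2) * hCas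
    · -- m = 2*t+1
      have ht' : m = 2*t+1 := ht
      subst ht'
      rw [show (2*t+1+1+1 : ℕ) = 2*t+3 from by ring, show (2*t+1+1 : ℕ) = 2*t+2 from by ring] at *
      rw [show 4*(2*t+2)+5 = 8*t+13 from by ring, show 4*(2*t+2)+4 = 8*t+12 from by ring,
        show 2*(2*t+2)+3 = 4*t+7 from by ring, show 2*(2*t+2)+2 = 4*t+6 from by ring]
      rw [show 4*(2*t+1)+5 = 8*t+9 from by ring, show 4*(2*t+1)+4 = 8*t+8 from by ring,
        show 2*(2*t+1)+3 = 4*t+5 from by ring, show 2*(2*t+1)+2 = 4*t+4 from by ring] at ih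
      have he1 : ((-1:ℝ))^(2*t+2) = 1 := by
        rw [show 2*t+2 = 2*(t+1) from by ring, pow_mul]; norm_num
      have he2 : ((-1:ℝ))^(2*t+3) = -1 := by
        rw [show 2*t+3 = 2*(t+1)+1 from by ring, pow_succ, pow_mul]; norm_num
      rw [he1] at ih
      rw [he2]
      have hA := hA_even (t+1)
      have hB := hB_even (t+1)
      rw [show 2*(t+1) = 2*t+2 from by ring, show 4*(t+1) = 4*t+4 from by ring] at hA hB
      have hCas := cassini (2*t+2)
      rw [he1] at hCas
      have hq2 : fr (2*t+4) = fr (2*t+3) + fr (2*t+2) := fr_add_two (2*t+2)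
      have d44 : fr (4*t+4) = 2*fr (2*t+2)*fr (2*t+3) - fr (2*t+2)^2 := by
        rw [show 4*t+4 = 2*(2*t+2) from by ring, fr_two_mul]
      have d45 : fr (4*t+5) = fr (2*t+3)^2 + fr (2*t+2)^2 := by
        rw [show 4*t+5 = 2*(2*t+2)+1 from by ring, fr_two_mul_add_one]
      have d46 : fr (4*t+6) = 2*fr (2*t+3)*fr (2*t+4) - fr (2*t+3)^2 := by
        rw [show 4*t+6 = 2*(2*t+3) from by ring, fr_two_mul]
      have d47 : fr (4*t+7) = fr (2*t+4)^2 + fr (2*t+3)^2 := by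
        rw [show 4*t+7 = 2*(2*t+3)+1 from by ring, fr_two_mul_add_one]
      have d88 : fr (8*t+8) = 2*fr (4*t+4)*fr (4*t+5) - fr (4*t+4)^2 := by
        rw [show 8*t+8 = 2*(4*t+4) from by ring, fr_two_mul]
      have d89 : fr (8*t+9) = fr (4*t+5)^2 + fr (4*t+4)^2 := by
        rw [show 8*t+9 = 2*(4*t+4)+1 from by ring, fr_two_mul_add_one]
      have d812 : fr (8*t+12) = 2*fr (4*t+6)*fr (4*t+7) - fr (4*t+6)^2 := by
        rw [show 8*t+12 = 2*(4*t+6) from by ring, fr_two_mul]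
      have d813 : fr (8*t+13) = fr (4*t+7)^2 + fr (4*t+6)^2 := by
        rw [show 8*t+13 = 2*(4*t+6)+1 from by ring, fr_two_mul_add_one]
      rw [d813, d812, d47, d46, hq2]
      rw [d89, d88, d45, d44] at ih
      rw [d44] at hA hB
      push_cast at ih hA hB ⊢
      linear_combination ih + 20*fr (2*t+2)^2 * hA + 20*fr (2*t+3)^2 * hB
        - (26 + 10*fr (2*t+3)^2 + 10*fr (2*t+2)*fr (2*t+3) - 10*fr (2*t+2)^2) * hCas


lemma conv_inv (k : ℕ) : (Real.goldenRatio^(2*k))⁻¹ = Real.goldenConj^(2*k) := by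
  have h : Real.goldenRatio^(2*k) * Real.goldenConj^(2*k) = 1 := by
    rw [← mul_pow, Real.goldenRatio_mul_goldenConj, pow_mul]
    norm_num
  exact inv_eq_of_mul_eq_one_right h

lemma lucas_form (k : ℕ) : Real.goldenRatio^k + Real.goldenConj^k = 2*fr (k+1) - fr k := by
  have h5 : Real.sqrt 5 ≠ 0 := by positivity
  have key : (Real.goldenRatio^k + Real.goldenConj^k) * Real.sqrt 5
      = 2*(Real.goldenRatio^(k+1) - Real.goldenConj^(k+1)) - (Real.goldenRatio^k - Real.goldenConj^k) := by
    rw [pow_succ, pow_succ]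
    unfold Real.goldenRatio Real.goldenConj
    ring
  calc Real.goldenRatio^k + Real.goldenConj^k
      = ((Real.goldenRatio^k + Real.goldenConj^k) * Real.sqrt 5)/Real.sqrt 5 :=
        (mul_div_cancel_right₀ _ h5).symm
    _ = (2*(Real.goldenRatio^(k+1) - Real.goldenConj^(k+1)) - (Real.goldenRatio^k - Real.goldenConj^k))/Real.sqrt 5 := by
        rw [key]
    _ = 2*fr (k+1) - fr k := by
        unfold fr
        rw [Real.coe_fib_eq, Real.coe_fib_eq]
        ring

lemma diff_form (k : ℕ) : Real.goldenRatio^k - Real.goldenConj^k = Real.sqrt 5 * fr k := by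
  have h5 : Real.sqrt 5 ≠ 0 := by positivity
  unfold fr
  rw [Real.coe_fib_eq]
  field_simp


theorem stmt_4 (n : ℕ) (hn : 0 < n) :
    frobSq (Z n) =
      (1 / 25) * (φ ^ (4 * n))⁻¹ + ((3 + (-1 : ℝ) ^ n) / 25) * (φ ^ (2 * n))⁻¹
      - (2 / (5 * Real.sqrt 5)) * (n : ℝ) * (φ ^ (2 * n))⁻¹
      + (13 * (-1 : ℝ) ^ n - 33) / 50 + (n : ℝ)
      + ((3 + (-1 : ℝ) ^ n) / 25) * φ ^ (2 * n)
      + (2 / (5 * Real.sqrt 5)) * (n : ℝ) * φ ^ (2 * n)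
      + (1 / 25) * φ ^ (4 * n) := by
  obtain ⟨m, rfl⟩ : ∃ m, n = m+1 := ⟨n-1, by omega⟩
  have h2 : Real.sqrt 5 * Real.sqrt 5 = 5 := Real.mul_self_sqrt (by norm_num)
  have hrs : 2/(5*Real.sqrt 5) = 2*Real.sqrt 5/25 := by
    have h5 : Real.sqrt 5 ≠ 0 := by positivity
    field_simp
    linear_combination (-5)*h2
  rw [show φ = Real.goldenRatio from rfl, hrs]
  rw [show 4*(m+1) = 2*(2*m+2) from by ring]
  rw [conv_inv (2*m+2), conv_inv (m+1)]
  have H := mainfib m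
  rw [show (2*m+3 : ℕ) = 2*(m+1)+1 from by ring, show (2*m+2 : ℕ) = 2*(m+1) from by ring,
    show (4*m+5 : ℕ) = 2*(2*m+2)+1 from by ring, show (4*m+4 : ℕ) = 2*(2*m+2) from by ring] at H
  have L4 := lucas_form (2*(2*m+2))
  have L2 := lucas_form (2*(m+1))
  have D2 := diff_form (2*(m+1))
  push_cast at H ⊢
  linear_combination (1/50)*H - (1/25)*L4 - ((3+(-1:ℝ)^(m+1))/25)*L2
    - (2*Real.sqrt 5*((m:ℝ)+1)/25)*D2 - (2*((m:ℝ)+1)*fr (2*(m+1))/25)*h2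
end

section
/- For every positive integer n, det((4/5)·I − Z_n) = −(1/2)·5^{−n}·(3·(−1)^n + 10n² − 5). -/
open Matrix

namespace Stmt8

/-- scalar entry function for the Fibonacci lower-triangular matrix -/
noncomputable def a (k i : ℕ) : ℝ :=
  if k = i then 1 else if i < k then (-1 : ℝ) ^ (k - i) * Nat.fib (k - i) else 0

noncomputable def A (n : ℕ) : Matrix (Fin n) (Fin n) ℝ := fun k i => a k.1 i.1

/-- shift-by-m matrix -/
def Sh (n m : ℕ) : Matrix (Fin n) (Fin n) ℝ := fun i j => if i.1 = j.1 + m then 1 else 0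

noncomputable def V (n : ℕ) : Matrix (Fin n) (Fin n) ℝ := 1 + Sh n 1 - Sh n 2
noncomputable def Ee (n : ℕ) : Matrix (Fin n) (Fin n) ℝ := 1 - Sh n 2

noncomputable def T (n : ℕ) : Matrix (Fin n) (Fin n) ℝ := fun i j =>
  if i.1 = j.1 then (if i.1 = 0 then -1/5 else if i.1 = 1 then 3/5 else 2/5)
  else if (i.1 = 0 ∧ j.1 = 1) ∨ (i.1 = 1 ∧ j.1 = 0) then 4/5
  else if i.1 = j.1 + 2 ∨ j.1 = i.1 + 2 then 1/5 else 0

lemma Sh_mul (n m : ℕ) (X : Matrix (Fin n) (Fin n) ℝ) (i j : Fin n) :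
    (Sh n m * X) i j = if h : m ≤ i.1 then X ⟨i.1 - m, by omega⟩ j else 0 := by
  rw [mul_apply]
  split_ifs with h
  · rw [Finset.sum_eq_single (⟨i.1 - m, by omega⟩ : Fin n)]
    · rw [Sh, if_pos (by simp; omega), one_mul]
    · intro k _ hk
      rw [Sh, if_neg, zero_mul]
      intro hc
      exact hk (by apply Fin.ext; simp; omega)
    · simp
  · apply Finset.sum_eq_zero
    intro k _
    rw [Sh, if_neg (by omega), zero_mul]

lemma Sh_mul_Sht (n u v : ℕ) (i j : Fin n) :
    (Sh n u * (Sh n v)ᵀ) i j = if u ≤ i.1 ∧ i.1 + v = j.1 + u then 1 else 0 := by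
  rw [mul_apply]
  split_ifs with h
  · rw [Finset.sum_eq_single (⟨i.1 - u, by omega⟩ : Fin n)]
    · rw [Sh, transpose_apply, Sh, if_pos (by simp; omega), if_pos (by simp; omega)]
      norm_num
    · intro k _ hk
      rw [Sh, if_neg, zero_mul]
      intro hc
      exact hk (by apply Fin.ext; simp; omega)
    · simp
  · push_neg at h
    apply Finset.sum_eq_zero
    intro k _
    by_cases h1 : i.1 = k.1 + u
    · rw [transpose_apply, Sh, Sh, if_pos h1, if_neg (by omega), mul_zero]
    · rw [Sh, if_neg h1, zero_mul]


lemma a_eq_zero_of_lt {r c : ℕ} (h : r < c) : a r c = 0 := by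
  unfold a; rw [if_neg (by omega), if_neg (by omega)]

lemma a_self (r : ℕ) : a r r = 1 := by unfold a; rw [if_pos rfl]

lemma a_of_gt {r c : ℕ} (h : c < r) : a r c = (-1:ℝ)^(r-c) * Nat.fib (r-c) := by
  unfold a; rw [if_neg (by omega), if_pos h]

lemma a_rec (i j : ℕ) :
    a i j + (if 1 ≤ i then a (i-1) j else 0) - (if 2 ≤ i then a (i-2) j else 0)
      = (if i = j then 1 else 0) - (if i = j + 2 then 1 else 0) := by
  rcases (show i < j ∨ i = j ∨ i = j+1 ∨ i = j+2 ∨ j+3 ≤ i by omega) with h|h|h|h|h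
  · rw [if_neg (show ¬ i = j by omega), if_neg (show ¬ i = j + 2 by omega),
      a_eq_zero_of_lt h]
    split_ifs with d1 d2 d2 <;>
      simp [a_eq_zero_of_lt (show i-1 < j by omega),
        a_eq_zero_of_lt (show i-2 < j by omega)]
  · subst h
    rw [if_pos (show i = i from rfl), if_neg (show ¬ i = i + 2 by omega), a_self]
    split_ifs with d1 d2 d2
    · rw [a_eq_zero_of_lt (show i-1 < i by omega),
        a_eq_zero_of_lt (show i-2 < i by omega)]; ring
    · rw [a_eq_zero_of_lt (show i-1 < i by omega)]; ring
    · omega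
    · ring
  · subst h
    rw [if_neg (show ¬ j + 1 = j by omega), if_neg (show ¬ j + 1 = j + 2 by omega),
      if_pos (show 1 ≤ j + 1 by omega), a_of_gt (show j < j + 1 by omega),
      show j + 1 - j = 1 by omega, show j + 1 - 1 = j by omega, a_self]
    split_ifs with d2
    · rw [a_eq_zero_of_lt (show j+1-2 < j by omega)]
      norm_num [Nat.fib_one]
    · norm_num [Nat.fib_one]
  · subst h
    rw [if_neg (show ¬ j + 2 = j by omega), if_pos (show j + 2 = j + 2 from rfl),
      if_pos (show 1 ≤ j + 2 by omega), if_pos (show 2 ≤ j + 2 by omega),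
      a_of_gt (show j < j + 2 by omega), show j + 2 - j = 2 by omega,
      show j + 2 - 1 = j + 1 by omega, show j + 2 - 2 = j by omega,
      a_of_gt (show j < j + 1 by omega), show j + 1 - j = 1 by omega, a_self]
    norm_num [Nat.fib_one, Nat.fib_two]
  · obtain ⟨m, rfl⟩ : ∃ m, i = j + 3 + m := ⟨i - (j+3), by omega⟩
    rw [if_neg (show ¬ j + 3 + m = j by omega), if_neg (show ¬ j + 3 + m = j + 2 by omega),
      if_pos (show 1 ≤ j + 3 + m by omega), if_pos (show 2 ≤ j + 3 + m by omega),
      a_of_gt (show j < j + 3 + m by omega), a_of_gt (show j < j + 3 + m - 1 by omega),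
      a_of_gt (show j < j + 3 + m - 2 by omega),
      show j+3+m - j = m + 3 by omega, show j+3+m - 1 - j = m + 2 by omega,
      show j+3+m - 2 - j = m + 1 by omega,
      show m + 3 = (m+1)+2 by ring, Nat.fib_add_two]
    push_cast
    ring

lemma V_mul_A (n : ℕ) : V n * A n = Ee n := by
  unfold V Ee
  ext i j
  simp only [Matrix.add_mul, Matrix.sub_mul, Matrix.one_mul, Matrix.sub_apply, Matrix.add_apply,
    Sh_mul, one_apply, A, Fin.val_mk, dite_eq_ite, Sh, Fin.ext_iff]
  exact a_rec i.1 j.1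
set_option maxHeartbeats 3000000 in
lemma T_eq (n : ℕ) : (4/5 : ℝ) • (V n * (V n)ᵀ) - Ee n * (Ee n)ᵀ = T n := by
  unfold V Ee
  ext i j
  simp only [transpose_add, transpose_sub, transpose_one, Matrix.add_mul, Matrix.sub_mul,
    Matrix.mul_add, Matrix.mul_sub, Matrix.mul_one, Matrix.one_mul, Matrix.smul_apply,
    Matrix.sub_apply, Matrix.add_apply, Sh_mul_Sht, smul_eq_mul]
  simp only [one_apply, transpose_apply, Sh, T, Fin.ext_iff]
  split_ifs <;> first | (exfalso; omega) | norm_num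
lemma neg_one_pow_sub_mul (i j k : ℕ) (h1 : i ≤ j) (h2 : j ≤ k) :
    ((-1:ℝ))^(k-i) * (-1)^(k-j) = (-1)^(j-i) := by
  obtain ⟨b, rfl⟩ : ∃ b, k = j + b := ⟨k - j, by omega⟩
  obtain ⟨c, rfl⟩ : ∃ c, j = i + c := ⟨j - i, by omega⟩
  rw [show i + c + b - i = c + b by omega, show i + c + b - (i + c) = b by omega,
    show i + c - i = c by omega]
  have hb : ((-1:ℝ))^b * (-1)^b = 1 := by
    rw [← pow_add]; exact Even.neg_one_pow ⟨b, rfl⟩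
  rw [pow_add, mul_assoc, hb, mul_one]

lemma key (n i j : ℕ) (hij : i ≤ j) (hj : j < n) :
    ∑ k ∈ Finset.range n, a k i * a k j
      = (if i = j then (1:ℝ) else (-1:ℝ)^(j-i) * Nat.fib (j-i))
        + (-1:ℝ)^(j-i) * ∑ k ∈ Finset.Icc (j+2) n,
            (Nat.fib (k-(i+1)) : ℝ) * (Nat.fib (k-(j+1)) : ℝ) := by
  have hsplit : ∑ k ∈ Finset.range n, a k i * a k j
      = ∑ k ∈ Finset.range (j+1), a k i * a k j + ∑ k ∈ Finset.Ico (j+1) n, a k i * a k j :=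
    (Finset.sum_range_add_sum_Ico _ (by omega)).symm
  have h1 : ∑ k ∈ Finset.range (j+1), a k i * a k j
      = if i = j then (1:ℝ) else (-1:ℝ)^(j-i) * Nat.fib (j-i) := by
    rw [Finset.sum_range_succ, Finset.sum_eq_zero, a_self, mul_one, zero_add]
    · by_cases hd : i = j
      · rw [if_pos hd, hd, a_self]
      · rw [if_neg hd, a_of_gt (by omega)]
    · intro k hk
      simp only [Finset.mem_range] at hk
      rw [a_eq_zero_of_lt hk, mul_zero]
  have h2 : ∑ k ∈ Finset.Ico (j+1) n, a k i * a k j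
      = (-1:ℝ)^(j-i) * ∑ k ∈ Finset.Ico (j+1) n, (Nat.fib (k-i) : ℝ) * Nat.fib (k-j) := by
    rw [Finset.mul_sum]
    apply Finset.sum_congr rfl
    intro k hk
    simp only [Finset.mem_Ico] at hk
    rw [a_of_gt (by omega), a_of_gt (by omega), mul_mul_mul_comm,
      neg_one_pow_sub_mul i j k hij (by omega)]
  have h3 : ∑ k ∈ Finset.Ico (j+1) n, (Nat.fib (k-i) : ℝ) * Nat.fib (k-j)
      = ∑ k ∈ Finset.Icc (j+2) n, (Nat.fib (k-(i+1)) : ℝ) * Nat.fib (k-(j+1)) := by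
    apply Finset.sum_nbij' (fun k => k + 1) (fun k => k - 1)
    · intro k hk; simp only [Finset.mem_Ico] at hk; simp only [Finset.mem_Icc]; omega
    · intro k hk; simp only [Finset.mem_Icc] at hk; simp only [Finset.mem_Ico]; omega
    · intro k _; omega
    · intro k hk; simp only [Finset.mem_Icc] at hk; omega
    · intro k _
      rw [show k + 1 - (i+1) = k - i by omega, show k + 1 - (j+1) = k - j by omega]
  rw [hsplit, h1, h2, h3]

lemma Z_eq (n : ℕ) : Z n = (A n)ᵀ * A n := by
  ext i j
  rw [mul_apply]
  simp only [transpose_apply, A]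
  rw [Fin.sum_univ_eq_sum_range (fun k => a k i.1 * a k j.1) n]
  unfold Z
  rcases lt_trichotomy i j with hlt | heq | hgt
  · have hv : i.1 < j.1 := hlt
    rw [if_neg (Fin.ne_of_lt hlt), if_pos hlt,
      key n i.1 j.1 (by omega) j.isLt, if_neg (by omega)]
    ring
  · subst heq
    rw [if_pos rfl, key n i.1 i.1 le_rfl i.isLt, if_pos rfl, Nat.sub_self, pow_zero, one_mul]
    congr 1
    apply Finset.sum_congr rfl
    intro k _
    ring
  · have hv : j.1 < i.1 := hgt
    rw [if_neg (Fin.ne_of_gt hgt), if_neg (by exact fun hc => absurd (Fin.lt_def.mp hc) (by omega)),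
      show (∑ k ∈ Finset.range n, a k i.1 * a k j.1)
          = ∑ k ∈ Finset.range n, a k j.1 * a k i.1 from
        Finset.sum_congr rfl (fun k _ => mul_comm _ _),
      key n j.1 i.1 (by omega) i.isLt, if_neg (by omega), mul_add, Finset.mul_sum,
      Finset.mul_sum]
    exact congrArg₂ (· + ·) rfl (Finset.sum_congr rfl (fun k _ => by ring))

lemma det_A (n : ℕ) : (A n).det = 1 := by
  rw [Matrix.det_of_lowerTriangular (A n)
    (by intro i j hij
        exact a_eq_zero_of_lt (show i.1 < j.1 from hij))]
  simp [A, a_self]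

lemma V_apply_eq_zero_of_lt (n : ℕ) (i j : Fin n) (h : i.1 < j.1) : V n i j = 0 := by
  simp only [V, Matrix.sub_apply, Matrix.add_apply, one_apply, Sh, Fin.ext_iff]
  rw [if_neg (by omega), if_neg (by omega), if_neg (by omega)]
  norm_num

lemma det_V (n : ℕ) : (V n).det = 1 := by
  rw [Matrix.det_of_lowerTriangular (V n)
    (by intro i j hij; exact V_apply_eq_zero_of_lt n i j hij)]
  have : ∀ i : Fin n, V n i i = 1 := by
    intro i
    simp only [V, Matrix.sub_apply, Matrix.add_apply, one_apply, Sh, Fin.ext_iff]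
    rw [if_neg (show ¬ (i.1 = i.1 + 1) by omega), if_neg (show ¬ (i.1 = i.1 + 2) by omega)]
    norm_num
  simp [this]

lemma det_chain (n : ℕ) :
    ((4/5 : ℝ) • (1 : Matrix (Fin n) (Fin n) ℝ) - Z n).det = (T n).det := by
  have hA := det_A n
  have hV := det_V n
  have h1 : A n * ((4/5 : ℝ) • (1 : Matrix (Fin n) (Fin n) ℝ) - Z n) * (A n)ᵀ
      = (A n * (A n)ᵀ) * ((4/5 : ℝ) • 1 - A n * (A n)ᵀ) := by
    rw [Z_eq]
    simp only [Matrix.mul_sub, Matrix.sub_mul, Matrix.mul_smul, Matrix.smul_mul,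
      Matrix.mul_one, Matrix.mul_assoc]
  have h2 : ((4/5 : ℝ) • (1 : Matrix (Fin n) (Fin n) ℝ) - Z n).det
      = ((4/5 : ℝ) • (1 : Matrix (Fin n) (Fin n) ℝ) - A n * (A n)ᵀ).det := by
    have hc := congrArg Matrix.det h1
    rw [det_mul, det_mul, det_mul, det_mul, hA, det_transpose, hA] at hc
    simpa using hc
  have h3 : V n * ((4/5 : ℝ) • (1 : Matrix (Fin n) (Fin n) ℝ) - A n * (A n)ᵀ) * (V n)ᵀ
      = (4/5 : ℝ) • (V n * (V n)ᵀ) - Ee n * (Ee n)ᵀ := by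
    rw [← V_mul_A n, Matrix.transpose_mul]
    simp only [Matrix.mul_sub, Matrix.sub_mul, Matrix.mul_smul, Matrix.smul_mul,
      Matrix.mul_one, Matrix.mul_assoc]
  have hc := congrArg Matrix.det h3
  rw [det_mul, det_mul, hV, det_transpose, hV, T_eq] at hc
  rw [h2, ← hc]
  ring
noncomputable def Td (m : ℕ) (x : ℝ) : Matrix (Fin m) (Fin m) ℝ := fun i j =>
  if i.1 = j.1 then (if i.1 = 0 then x else 2/5)
  else if i.1 = j.1 + 1 ∨ j.1 = i.1 + 1 then 1/5 else 0

lemma Td_submatrix (m : ℕ) (x : ℝ) :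
    (Td (m+1) x).submatrix Fin.succ Fin.succ = Td m (2/5) := by
  ext i j
  simp only [submatrix_apply, Td, Fin.val_succ]
  split_ifs <;> first | rfl | omega | contradiction

lemma det_Td_succ_succ (m : ℕ) (x : ℝ) :
    (Td (m+2) x).det = x * (Td (m+1) (2/5)).det - 1/25 * (Td m (2/5)).det := by
  have h00 : Td (m+2) x 0 0 = x := by simp [Td]
  have h01 : Td (m+2) x 0 1 = 1/5 := by
    simp only [Td, Fin.val_zero, Fin.val_one]
    norm_num
  have hS1 : ((Td (m+2) x).submatrix Fin.succ (Fin.succAbove 1)).det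
      = 1/5 * (Td m (2/5)).det := by
    rw [det_succ_column_zero, Fin.sum_univ_succ]
    have e0 : ((Td (m+2) x).submatrix Fin.succ (Fin.succAbove 1)) 0 0 = 1/5 := by
      simp only [submatrix_apply, Fin.one_succAbove_zero]
      simp only [Td, Fin.val_succ, Fin.val_zero]
      norm_num
    have erest : ∀ k : Fin m,
        ((Td (m+2) x).submatrix Fin.succ (Fin.succAbove 1)) (Fin.succ k) 0 = 0 := by
      intro k
      simp only [submatrix_apply, Fin.one_succAbove_zero]
      simp only [Td, Fin.val_succ, Fin.val_zero]
      split_ifs <;> first | rfl | (exfalso; omega) | simp_all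
    have hsub : (((Td (m+2) x).submatrix Fin.succ (Fin.succAbove 1)).submatrix
        (Fin.succAbove 0) Fin.succ) = Td m (2/5) := by
      ext i j
      simp only [submatrix_apply, Fin.succAbove_zero, Fin.one_succAbove_succ,
        Td, Fin.val_succ]
      split_ifs <;> first | rfl | omega | contradiction
    rw [e0, hsub]
    have : ∀ k : Fin m,
        ((-1:ℝ))^((Fin.succ k).1) * ((Td (m+2) x).submatrix Fin.succ (Fin.succAbove 1))
            (Fin.succ k) 0 *
          ((((Td (m+2) x).submatrix Fin.succ (Fin.succAbove 1))).submatrix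
            (Fin.succ k).succAbove Fin.succ).det = 0 := by
      intro k
      rw [erest k, mul_zero, zero_mul]
    rw [Finset.sum_eq_zero (fun k _ => this k)]
    norm_num
  rw [det_succ_row_zero, Fin.sum_univ_succ, Fin.sum_univ_succ]
  have hrest : ∀ k : Fin m,
      ((-1:ℝ))^((Fin.succ (Fin.succ k)).1) * Td (m+2) x 0 (Fin.succ (Fin.succ k)) *
        ((Td (m+2) x).submatrix Fin.succ (Fin.succ (Fin.succ k)).succAbove).det = 0 := by
    intro k
    have : Td (m+2) x 0 (Fin.succ (Fin.succ k)) = 0 := by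
      simp only [Td, Fin.val_succ, Fin.val_zero]
      split_ifs <;> first | rfl | (exfalso; omega) | simp_all
    rw [this, mul_zero, zero_mul]
  rw [Finset.sum_eq_zero (fun k _ => hrest k), h00, Fin.succAbove_zero, Td_submatrix,
    show (Fin.succ (0 : Fin (m+1))) = 1 from Fin.succ_zero_eq_one, h01, hS1]
  simp
  ring
lemma det_Td_std (m : ℕ) : (Td m (2/5)).det = ((m:ℝ)+1)/5^m := by
  induction m using Nat.strong_induction_on with
  | _ m ih =>
    match m with
    | 0 => rw [show (Td 0 (2/5)) = 1 from Subsingleton.elim _ _, det_one]; norm_num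
    | 1 =>
      rw [det_fin_one]
      simp only [Td, Fin.val_zero]
      norm_num
    | (k+2) =>
      rw [det_Td_succ_succ, ih (k+1) (by omega), ih k (by omega)]
      push_cast
      field_simp
      ring

lemma det_Td_gen (m : ℕ) (x : ℝ) :
    (Td (m+1) x).det = (5*x*((m:ℝ)+1) - m)/5^(m+1) := by
  match m with
  | 0 =>
    rw [det_fin_one]
    simp only [Td, Fin.val_zero]
    norm_num
  | (k+1) =>
    rw [det_Td_succ_succ, det_Td_std, det_Td_std]
    push_cast
    field_simp
    ring

lemma det_updateRow_e0 (m : ℕ) (x c : ℝ) :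
    ((Td (m+1) x).updateRow 0 (fun j => if j = 0 then c else 0)).det
      = c * (Td m (2/5)).det := by
  have hsub : ((Td (m+1) x).updateRow 0 (fun j => if j = 0 then c else 0)).submatrix
      Fin.succ (Fin.succAbove 0) = Td m (2/5) := by
    rw [Fin.succAbove_zero]
    ext i j
    rw [submatrix_apply, Matrix.updateRow_ne (Fin.succ_ne_zero i)]
    have := congrFun (congrFun (Td_submatrix m x) i) j
    simpa using this
  rw [det_succ_row_zero, Fin.sum_univ_succ]
  have hrest : ∀ k : Fin m,
      ((-1:ℝ))^((Fin.succ k).1) *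
        ((Td (m+1) x).updateRow 0 (fun j => if j = 0 then c else 0)) 0 (Fin.succ k) *
        (((Td (m+1) x).updateRow 0 (fun j => if j = 0 then c else 0)).submatrix
          Fin.succ (Fin.succ k).succAbove).det = 0 := by
    intro k
    rw [Matrix.updateRow_self, if_neg (Fin.succ_ne_zero k), mul_zero, zero_mul]
  rw [Finset.sum_eq_zero (fun k _ => hrest k), hsub, Matrix.updateRow_self, if_pos rfl]
  simp
def Bc (p q : ℕ) (c : ℝ) : Matrix (Fin p) (Fin q) ℝ :=
  fun k l => if k.1 = 0 ∧ l.1 = 0 then c else 0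

lemma det_aux (p q : ℕ) [NeZero p] [NeZero q] (Ab : Matrix (Fin p) (Fin p) ℝ)
    (Db : Matrix (Fin q) (Fin q) ℝ) (c : ℝ) :
    (fromBlocks Ab (Bc p q c) (Bc q p c) Db).det
      = Ab.det * Db.det -
        (Ab.updateRow 0 (fun l => if l = 0 then c else 0)).det *
        (Db.updateRow 0 (fun l => if l = 0 then c else 0)).det := by
  set F := fromBlocks Ab (Bc p q c) (Bc q p c) Db with hF
  set i₀ : Fin p ⊕ Fin q := Sum.inl 0 with hi₀
  set i₁ : Fin p ⊕ Fin q := Sum.inr 0 with hi₁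
  have hne : i₀ ≠ i₁ := by simp [hi₀, hi₁]
  have helim : F i₀ = Sum.elim (Ab 0) (fun _ => (0:ℝ)) + Sum.elim (fun _ => (0:ℝ)) (Bc p q c 0) := by
    funext j
    rcases j with l | l <;> simp [hi₀, hi₁, hF, fromBlocks]
  have hsplit1 : F.det = (F.updateRow i₀ (Sum.elim (Ab 0) (fun _ => (0:ℝ)))).det
      + (F.updateRow i₀ (Sum.elim (fun _ => (0:ℝ)) (Bc p q c 0))).det := by
    conv_lhs => rw [← Matrix.updateRow_eq_self F i₀, helim]
    rw [Matrix.det_updateRow_add]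
  have hT1 : (F.updateRow i₀ (Sum.elim (Ab 0) (fun _ => (0:ℝ)))).det = Ab.det * Db.det := by
    have : F.updateRow i₀ (Sum.elim (Ab 0) (fun _ => (0:ℝ))) = fromBlocks Ab 0 (Bc q p c) Db := by
      ext i j
      rcases i with k | k
      · rcases j with l | l <;>
          · rw [Matrix.updateRow_apply]
            by_cases hk : (Sum.inl k : Fin p ⊕ Fin q) = i₀
            · rw [if_pos hk]
              have : k = 0 := by simpa [hi₀] using hk
              subst this
              simp [hi₀, hi₁, hF, fromBlocks]
            · rw [if_neg hk]
              have hk0 : k.1 ≠ 0 := by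
                intro h
                exact hk (by simp [hi₀, Fin.ext_iff, h])
              simp [hi₀, hi₁, hF, fromBlocks, Bc, hk0]
      · rcases j with l | l <;>
          · rw [Matrix.updateRow_apply, if_neg (by simp [hi₀])]
            simp [hi₀, hi₁, hF, fromBlocks]
    rw [this, Matrix.det_fromBlocks_zero₁₂]
  set G := F.updateRow i₀ (Sum.elim (fun _ => (0:ℝ)) (Bc p q c 0)) with hG
  have hGrow : G i₁ = Sum.elim (Bc q p c 0) (fun _ => (0:ℝ)) + Sum.elim (fun _ => (0:ℝ)) (Db 0) := by
    funext j
    rw [hG, Matrix.updateRow_ne (by simp [hi₀, hi₁])]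
    rcases j with l | l <;> simp [hi₀, hi₁, hF, fromBlocks]
  have hsplit2 : G.det = (G.updateRow i₁ (Sum.elim (Bc q p c 0) (fun _ => (0:ℝ)))).det
      + (G.updateRow i₁ (Sum.elim (fun _ => (0:ℝ)) (Db 0))).det := by
    conv_lhs => rw [← Matrix.updateRow_eq_self G i₁, hGrow]
    rw [Matrix.det_updateRow_add]
  have hT2b : (G.updateRow i₁ (Sum.elim (fun _ => (0:ℝ)) (Db 0))).det = 0 := by
    have hzero : (G.updateRow i₁ (Sum.elim (fun _ => (0:ℝ)) (Db 0)))
        = fromBlocks (Ab.updateRow 0 0) (Bc p q c) 0 Db := by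
      ext i j
      rcases i with k | k
      · rw [Matrix.updateRow_ne (by simp [hi₁]), hG, Matrix.updateRow_apply]
        by_cases hk : (Sum.inl k : Fin p ⊕ Fin q) = i₀
        · rw [if_pos hk]
          have hk0 : k = 0 := by simpa [hi₀] using hk
          subst hk0
          rcases j with l | l <;> simp [hi₀, hi₁, fromBlocks]
        · rw [if_neg hk]
          have hk0 : k ≠ 0 := by
            intro h; exact hk (by simp [hi₀, h])
          rcases j with l | l <;> simp [hi₀, hi₁, hF, fromBlocks, Matrix.updateRow_ne hk0]
      · rw [Matrix.updateRow_apply]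
        by_cases hk : (Sum.inr k : Fin p ⊕ Fin q) = i₁
        · rw [if_pos hk]
          have hk0 : k = 0 := by simpa [hi₁] using hk
          subst hk0
          rcases j with l | l <;> simp [hi₀, hi₁, fromBlocks]
        · rw [if_neg hk, hG, Matrix.updateRow_ne (by simp [hi₀])]
          have hk0 : k.1 ≠ 0 := by
            intro h; exact hk (by simp [hi₁, Fin.ext_iff, h])
          rcases j with l | l <;> simp [hi₀, hi₁, hF, fromBlocks, Bc, hk0]
    rw [hzero, Matrix.det_fromBlocks_zero₂₁]
    have : (Ab.updateRow 0 0).det = 0 :=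
      Matrix.det_eq_zero_of_row_eq_zero 0 (by simp)
    rw [this, zero_mul]
  have hT2a : (G.updateRow i₁ (Sum.elim (Bc q p c 0) (fun _ => (0:ℝ)))).det
      = - ((Ab.updateRow 0 (fun l => if l = 0 then c else 0)).det *
          (Db.updateRow 0 (fun l => if l = 0 then c else 0)).det) := by
    set X := Ab.updateRow 0 (fun l => if l = 0 then c else 0) with hX
    set Y := Db.updateRow 0 (fun l => if l = 0 then c else 0) with hY
    set σ : Equiv.Perm (Fin p ⊕ Fin q) := Equiv.swap i₀ i₁ with hσ
    have hperm : (G.updateRow i₁ (Sum.elim (Bc q p c 0) (fun _ => (0:ℝ))))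
        = (fromBlocks X 0 0 Y).submatrix σ id := by
      ext i j
      rw [submatrix_apply, id_eq]
      rcases i with k | k
      · by_cases hk : k = (0 : Fin p)
        · subst hk
          have hswap : σ i₀ = i₁ := Equiv.swap_apply_left _ _
          rw [show (Sum.inl (0 : Fin p)) = i₀ from rfl, hswap,
            Matrix.updateRow_ne hne, hG, Matrix.updateRow_self]
          rcases j with l | l <;> simp [hi₀, hi₁, fromBlocks, hY, Bc, Matrix.updateRow_self]
        · have hfix : σ (Sum.inl k) = Sum.inl k :=
            Equiv.swap_apply_of_ne_of_ne (by simp [hi₀, hk]) (by simp [hi₁])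
          rw [hfix, Matrix.updateRow_ne (by simp [hi₁]), hG,
            Matrix.updateRow_ne (by simp [hi₀, hk])]
          have hk0 : k.1 ≠ 0 := fun h => hk (Fin.ext h)
          rcases j with l | l <;>
            simp [hi₀, hi₁, hF, fromBlocks, hX, Bc, Matrix.updateRow_ne hk, hk0]
      · by_cases hk : k = (0 : Fin q)
        · subst hk
          have hswap : σ i₁ = i₀ := Equiv.swap_apply_right _ _
          rw [show (Sum.inr (0 : Fin q)) = i₁ from rfl, hswap, Matrix.updateRow_self]
          rcases j with l | l <;> simp [hi₀, hi₁, fromBlocks, hX, Bc, Matrix.updateRow_self]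
        · have hfix : σ (Sum.inr k) = Sum.inr k :=
            Equiv.swap_apply_of_ne_of_ne (by simp [hi₀]) (by simp [hi₁, hk])
          rw [hfix, Matrix.updateRow_ne (by simp [hi₁, hk]), hG,
            Matrix.updateRow_ne (by simp [hi₀])]
          have hk0 : k.1 ≠ 0 := fun h => hk (Fin.ext h)
          rcases j with l | l <;>
            simp [hi₀, hi₁, hF, fromBlocks, hY, Bc, Matrix.updateRow_ne hk, hk0]
    rw [hperm, Matrix.det_permute, Matrix.det_fromBlocks_zero₂₁,
      Equiv.Perm.sign_swap hne]
    simp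
  rw [hsplit1, hT1, hsplit2, hT2a, hT2b]
  ring
def itl (p q : ℕ) (h1 : p ≤ q + 1) (h2 : q ≤ p) : Fin p ⊕ Fin q ≃ Fin (p + q) where
  toFun := Sum.elim (fun k => ⟨2*k.1, by omega⟩) (fun k => ⟨2*k.1+1, by omega⟩)
  invFun i := if h : i.1 % 2 = 0 then Sum.inl ⟨i.1/2, by omega⟩ else Sum.inr ⟨i.1/2, by omega⟩
  left_inv := by
    rintro (k | k) <;> simp only [Sum.elim_inl, Sum.elim_inr]
    · show (if h : 2 * k.1 % 2 = 0 then (Sum.inl ⟨2 * k.1 / 2, by omega⟩ : Fin p ⊕ Fin q)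
        else Sum.inr ⟨2 * k.1 / 2, by omega⟩) = Sum.inl k
      rw [dif_pos (by omega)]
      congr 1
      apply Fin.ext
      show 2 * k.1 / 2 = k.1
      omega
    · show (if h : (2 * k.1 + 1) % 2 = 0 then (Sum.inl ⟨(2 * k.1 + 1) / 2, by omega⟩ : Fin p ⊕ Fin q)
        else Sum.inr ⟨(2 * k.1 + 1) / 2, by omega⟩) = Sum.inr k
      rw [dif_neg (by omega)]
      congr 1
      apply Fin.ext
      show (2 * k.1 + 1) / 2 = k.1
      omega
  right_inv := by
    intro i
    dsimp only
    by_cases h : i.1 % 2 = 0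
    · rw [dif_pos h]
      simp only [Sum.elim_inl]
      apply Fin.ext
      show 2 * (i.1 / 2) = i.1
      omega
    · rw [dif_neg h]
      simp only [Sum.elim_inr]
      apply Fin.ext
      show 2 * (i.1 / 2) + 1 = i.1
      omega

lemma T_block (p q : ℕ) (h1 : p ≤ q + 1) (h2 : q ≤ p) :
    (T (p+q)).submatrix (itl p q h1 h2) (itl p q h1 h2)
      = fromBlocks (Td p (-1/5)) (Bc p q (4/5)) (Bc q p (4/5)) (Td q (3/5)) := by
  ext i j
  rcases i with k | k <;> rcases j with l | l <;>
    · simp only [submatrix_apply, itl, Equiv.coe_fn_mk, Sum.elim_inl, Sum.elim_inr,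
        fromBlocks_apply₁₁, fromBlocks_apply₁₂, fromBlocks_apply₂₁, fromBlocks_apply₂₂,
        T, Td, Bc]
      split_ifs <;> first | rfl | omega | contradiction | (simp_all <;> grind)

lemma det_T_formula (n : ℕ) (hn : 0 < n) :
    (T n).det = (((1:ℝ) - 2*(((n+1)/2 : ℕ) : ℝ)) * (2*(((n/2 : ℕ)) : ℝ) + 1)
        - 16 * (((n+1)/2 : ℕ) : ℝ) * (((n/2 : ℕ)) : ℝ)) / 5^n := by
  rcases (show n = 1 ∨ 2 ≤ n by omega) with rfl | hn2
  · rw [det_fin_one]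
    simp only [T, Fin.val_zero]
    norm_num
  · obtain ⟨p', hp'⟩ : ∃ p', (n+1)/2 = p' + 1 := ⟨(n+1)/2 - 1, by omega⟩
    obtain ⟨q', hq'⟩ : ∃ q', n/2 = q' + 1 := ⟨n/2 - 1, by omega⟩
    have hn' : n = (p' + 1) + (q' + 1) := by omega
    subst hn'
    rw [hp', hq']
    rw [← Matrix.det_submatrix_equiv_self (itl (p'+1) (q'+1) (by omega) (by omega)) _,
      T_block, det_aux]
    rw [det_Td_gen, det_Td_gen, det_updateRow_e0, det_updateRow_e0,
      det_Td_std, det_Td_std]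
    have h5n : (5:ℝ)^((p'+1) + (q'+1)) = 5^(p'+1) * 5^(q'+1) := by
      rw [← pow_add]
    rw [h5n]
    have h1 : (5:ℝ)^(p'+1) ≠ 0 := by positivity
    have h2 : (5:ℝ)^(q'+1) ≠ 0 := by positivity
    have h3 : (5:ℝ)^p' ≠ 0 := by positivity
    have h4 : (5:ℝ)^q' ≠ 0 := by positivity
    field_simp
    push_cast
    ring
end Stmt8

theorem stmt_8 (n : ℕ) (hn : 0 < n) :
    ((4 / 5 : ℝ) • (1 : Matrix (Fin n) (Fin n) ℝ) - Z n).det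
      = -(1 / 2) * ((5 : ℝ) ^ n)⁻¹ * (3 * (-1 : ℝ) ^ n + 10 * (n : ℝ) ^ 2 - 5) := by
  rw [Stmt8.det_chain n, Stmt8.det_T_formula n hn]
  rcases Nat.even_or_odd n with ⟨m, rfl⟩ | ⟨m, rfl⟩
  · rw [show (m + m + 1)/2 = m by omega, show (m + m)/2 = m by omega,
      Even.neg_one_pow ⟨m, rfl⟩]
    have h5 : (5:ℝ)^(m+m) ≠ 0 := by positivity
    push_cast
    field_simp
    ring
  · rw [show (2*m+1+1)/2 = m+1 by omega, show (2*m+1)/2 = m by omega,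
      Odd.neg_one_pow ⟨m, rfl⟩]
    have h5 : (5:ℝ)^(2*m+1) ≠ 0 := by positivity
    push_cast
    field_simp
    ring
end

section
/- For every integer n ≥ 2, if λ₁ ≥ λ₂ ≥ … ≥ λₙ are the eigenvalues of Z_n listed in nonincreasing order (with multiplicity), then the second largest eigenvalue satisfies λ₂ < 4/5. -/
open Matrix Polynomial

lemma charpoly_conj {n : ℕ} (P A Q : Matrix (Fin n) (Fin n) ℝ) (hPQ : P * Q = 1) :
    (P * A * Q).charpoly = A.charpoly := by
  have hcm : charmatrix (P * A * Q) =
      (C : ℝ →+* ℝ[X]).mapMatrix P * charmatrix A * (C : ℝ →+* ℝ[X]).mapMatrix Q := by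
    unfold charmatrix
    rw [mul_sub, sub_mul]
    congr 1
    · have h1 : (C : ℝ →+* ℝ[X]).mapMatrix P * Matrix.scalar (Fin n) (X : ℝ[X])
          = Matrix.scalar (Fin n) (X : ℝ[X]) * (C : ℝ →+* ℝ[X]).mapMatrix P :=
        ((Matrix.scalar_commute (X : ℝ[X]) (fun r => Commute.all _ r) _)).symm
      rw [h1, mul_assoc, ← RingHom.map_mul, hPQ]
      simp
    · rw [← RingHom.map_mul, ← RingHom.map_mul]
  unfold Matrix.charpoly
  rw [hcm, det_mul, det_mul]
  have hP : ((C : ℝ →+* ℝ[X]).mapMatrix P).det = C P.det := by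
    rw [← RingHom.map_det]
  have hQ : ((C : ℝ →+* ℝ[X]).mapMatrix Q).det = C Q.det := by
    rw [← RingHom.map_det]
  rw [hP, hQ]
  have : P.det * Q.det = 1 := by
    rw [← det_mul, hPQ, det_one]
  calc C P.det * (charmatrix A).det * C Q.det
      = (charmatrix A).det * (C P.det * C Q.det) := by ring
    _ = (charmatrix A).det := by rw [← C_mul, this]; simp

lemma Zherm (n : ℕ) : (Z n).IsHermitian := by
  ext i j
  simp only [conjTranspose_apply, star_trivial]
  unfold Z
  rcases lt_trichotomy i j with h | h | h
  · -- goal: Z j i = Z i j with i < j ; Z j i uses third branch, Z i j second branch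
    rw [if_neg (ne_of_gt h), if_neg (not_lt_of_gt h), if_neg (ne_of_lt h), if_pos h]
    exact congrArg _ (congrArg _ (Finset.sum_congr rfl fun k _ => mul_comm _ _))
  · subst h; simp
  · rw [if_neg (ne_of_lt h), if_pos h, if_neg (ne_of_gt h), if_neg (not_lt_of_gt h)]
    exact congrArg _ (congrArg _ (Finset.sum_congr rfl fun k _ => mul_comm _ _))

noncomputable def gnat : ℕ → ℕ → ℝ := fun a b =>
  if b = a then 1 else if b < a then (-1 : ℝ) ^ (a - b) * (Nat.fib (a - b) : ℝ) else 0

noncomputable def Gm (n : ℕ) : Matrix (Fin n) (Fin n) ℝ := fun i j => gnat i.1 j.1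

lemma gnat_eq (a : ℕ) : gnat a a = 1 := by simp [gnat]

lemma gnat_lt {a b : ℕ} (h : b < a) : gnat a b = (-1 : ℝ) ^ (a - b) * (Nat.fib (a - b) : ℝ) := by
  rw [gnat, if_neg (Nat.ne_of_lt h), if_pos h]

lemma gnat_gt {a b : ℕ} (h : a < b) : gnat a b = 0 := by
  simp [gnat, Nat.ne_of_lt' h, not_lt_of_gt h, not_lt.mpr (le_of_lt h)]

lemma tail_reindex (a b n : ℕ) (hab : a ≤ b) :
    ∑ m ∈ Finset.Ico (b+1) n, (Nat.fib (m - a) : ℝ) * (Nat.fib (m - b) : ℝ)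
      = ∑ k ∈ Finset.Icc (b+2) n, (Nat.fib (k - (a+1)) : ℝ) * (Nat.fib (k - (b+1)) : ℝ) := by
  rw [← Finset.Ico_add_one_right_eq_Icc, Finset.sum_Ico_eq_sum_range, Finset.sum_Ico_eq_sum_range]
  have hlen : n - (b+1) = n + 1 - (b+2) := by omega
  rw [← hlen]
  refine Finset.sum_congr rfl fun i _ => ?_
  have e1 : b + 1 + i - a = b + 2 + i - (a + 1) := by omega
  have e2 : b + 1 + i - b = b + 2 + i - (b + 1) := by omega
  rw [e1, e2]

lemma tailsum (a b n : ℕ) (hab : a ≤ b) :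
    ∑ m ∈ Finset.Ico (b+1) n, gnat m a * gnat m b
      = (-1 : ℝ) ^ (b - a) *
        ∑ k ∈ Finset.Icc (b+2) n, (Nat.fib (k - (a+1)) : ℝ) * (Nat.fib (k - (b+1)) : ℝ) := by
  rw [← tail_reindex a b n hab, Finset.mul_sum]
  refine Finset.sum_congr rfl fun m hm => ?_
  rw [Finset.mem_Ico] at hm
  have ham : a < m := by omega
  have hbm : b < m := by omega
  rw [gnat_lt ham, gnat_lt hbm]
  have h1 : (-1 : ℝ) ^ (m - a) = (-1 : ℝ) ^ (b - a) * (-1 : ℝ) ^ (m - b) := by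
    rw [← pow_add]; congr 1; omega
  have h2 : (-1 : ℝ) ^ (m - b) * (-1 : ℝ) ^ (m - b) = 1 := by
    rw [← pow_add]; exact Even.neg_one_pow ⟨m - b, rfl⟩
  rw [h1]
  have expand : ((-1 : ℝ) ^ (b - a) * (-1 : ℝ) ^ (m - b) * (Nat.fib (m - a) : ℝ)) *
      ((-1 : ℝ) ^ (m - b) * (Nat.fib (m - b) : ℝ))
      = (-1 : ℝ) ^ (b - a) * (((-1 : ℝ) ^ (m - b) * (-1 : ℝ) ^ (m - b)) *
        ((Nat.fib (m - a) : ℝ) * (Nat.fib (m - b) : ℝ))) := by ring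
  rw [expand, h2, one_mul]

lemma col_sum (n : ℕ) (i j : Fin n) (hij : i ≤ j) :
    ∑ k : Fin n, Gm n k i * Gm n k j = Z n i j := by
  have hsum : ∑ k : Fin n, Gm n k i * Gm n k j
      = ∑ m ∈ Finset.range n, gnat m i.1 * gnat m j.1 :=
    Fin.sum_univ_eq_sum_range (fun m => gnat m i.1 * gnat m j.1) n
  rw [hsum]
  have hjn : j.1 < n := j.2
  have hsplit : ∑ m ∈ Finset.range n, gnat m i.1 * gnat m j.1
      = ∑ m ∈ Finset.Ico j.1 n, gnat m i.1 * gnat m j.1 := by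
    rw [Finset.range_eq_Ico, ← Finset.sum_Ico_consecutive _ (Nat.zero_le j.1) (le_of_lt hjn)]
    have : ∑ m ∈ Finset.Ico 0 j.1, gnat m i.1 * gnat m j.1 = 0 := by
      refine Finset.sum_eq_zero fun m hm => ?_
      rw [Finset.mem_Ico] at hm
      rw [gnat_gt hm.2, mul_zero]
    rw [this, zero_add]
  rw [hsplit, Finset.sum_eq_sum_Ico_succ_bot hjn, gnat_eq, mul_one,
    tailsum i.1 j.1 n hij]
  rcases eq_or_lt_of_le hij with h | h
  · subst h
    rw [gnat_eq]
    have : Z n i i = 1 + ∑ k ∈ Finset.Icc (i.1 + 2) n, ((Nat.fib (k - (i.1 + 1)) : ℝ)) ^ 2 := by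
      simp [Z]
    rw [this, Nat.sub_self, pow_zero, one_mul]
    congr 1
    exact Finset.sum_congr rfl fun k _ => (sq _).symm
  · have hv : i.1 < j.1 := h
    rw [gnat_lt hv]
    have : Z n i j = (-1 : ℝ) ^ (j.1 - i.1) * ((Nat.fib (j.1 - i.1) : ℝ) +
        ∑ k ∈ Finset.Icc (j.1 + 2) n,
          (Nat.fib (k - (i.1 + 1)) : ℝ) * (Nat.fib (k - (j.1 + 1)) : ℝ)) := by
      rw [Z, if_neg (Fin.ne_of_lt h), if_pos h]
    rw [this]
    ring

lemma ZGG (n : ℕ) : Z n = (Gm n)ᵀ * Gm n := by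
  ext i j
  rw [Matrix.mul_apply]
  simp only [transpose_apply]
  rcases le_or_gt i j with h | h
  · exact (col_sum n i j h).symm
  · have h1 : ∑ k : Fin n, Gm n k j * Gm n k i = Z n j i := col_sum n j i (le_of_lt h)
    have h2 : Z n i j = Z n j i := by
      have h3 := congrFun (congrFun (Zherm n) i) j
      simpa [Matrix.conjTranspose_apply] using h3.symm
    calc Z n i j = Z n j i := h2
      _ = ∑ k : Fin n, Gm n k j * Gm n k i := h1.symm
      _ = ∑ k : Fin n, Gm n k i * Gm n k j :=
          Finset.sum_congr rfl fun k _ => mul_comm _ _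

noncomputable def zs (X : ℕ → ℝ) : ℕ → ℝ
  | 0 => 0
  | 1 => 0
  | (k+2) => X (k+1) - zs X (k+1) + zs X k

lemma zs_rec (X : ℕ → ℝ) (k : ℕ) : zs X (k+2) = X (k+1) - zs X (k+1) + zs X k := rfl
lemma zs_zero (X : ℕ → ℝ) : zs X 0 = 0 := rfl
lemma zs_one (X : ℕ → ℝ) : zs X 1 = 0 := rfl

lemma zs_formula (X : ℕ → ℝ) : ∀ i : ℕ,
    zs X (i+1) = ∑ s ∈ Finset.range i, (-1 : ℝ) ^ (i - 1 - s) * (Nat.fib (i - s) : ℝ) * X (s+1) := by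
  have key : ∀ i : ℕ,
      (zs X (i+1) = ∑ s ∈ Finset.range i, (-1 : ℝ) ^ (i - 1 - s) * (Nat.fib (i - s) : ℝ) * X (s+1)) ∧
      (zs X (i+2) = ∑ s ∈ Finset.range (i+1), (-1 : ℝ) ^ (i - s) * (Nat.fib (i + 1 - s) : ℝ) * X (s+1)) := by
    intro i
    induction i with
    | zero =>
      constructor
      · simp [zs]
      · simp [zs, zs_rec]
    | succ j ih =>
      refine ⟨?_, ?_⟩
      · -- restate ih.2 with adjusted exponents
        rw [ih.2]
        refine Finset.sum_congr rfl fun s hs => ?_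
        rw [Finset.mem_range] at hs
        have e1 : j + 1 - 1 - s = j - s := by omega
        rw [e1]
      · rw [zs_rec X (j+1), ih.2, ih.1]
        conv_rhs => rw [Finset.sum_range_succ]
        have etop : (-1 : ℝ) ^ (j + 1 - (j+1)) * (Nat.fib (j + 1 + 1 - (j+1)) : ℝ) * X (j+1+1)
            = X (j + 2) := by
          norm_num
        rw [etop]
        have hsplit : ∑ s ∈ Finset.range (j+1),
              (-1 : ℝ) ^ (j + 1 - s) * (Nat.fib (j + 1 + 1 - s) : ℝ) * X (s+1)
            = ∑ s ∈ Finset.range (j+1),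
              (-((-1 : ℝ) ^ (j - s) * (Nat.fib (j + 1 - s) : ℝ) * X (s+1))
                + (-1 : ℝ) ^ (j - 1 - s) * (Nat.fib (j - s) : ℝ) * X (s+1)) := by
          refine Finset.sum_congr rfl fun s hs => ?_
          rw [Finset.mem_range] at hs
          have hsj : s ≤ j := by omega
          have efib : (Nat.fib (j + 1 + 1 - s) : ℝ)
              = (Nat.fib (j + 1 - s) : ℝ) + (Nat.fib (j - s) : ℝ) := by
            have e2 : j + 1 + 1 - s = (j - s) + 2 := by omega
            have e3 : j + 1 - s = (j - s) + 1 := by omega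
            rw [e2, e3, Nat.fib_add_two]
            push_cast; ring
          have esign : (-1 : ℝ) ^ (j + 1 - s) = -(-1 : ℝ) ^ (j - s) := by
            have e4 : j + 1 - s = (j - s) + 1 := by omega
            rw [e4, pow_succ]; ring
          rcases lt_or_eq_of_le hsj with hlt | heq
          · have esign2 : (-1 : ℝ) ^ (j + 1 - s) = (-1 : ℝ) ^ (j - 1 - s) := by
              have e5 : j + 1 - s = (j - 1 - s) + 2 := by omega
              rw [e5, pow_succ, pow_succ]; ring
            rw [efib]
            rw [mul_add, add_mul]
            congr 1
            · rw [esign]; ring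
            · rw [esign2]
          · subst heq
            have e6 : s + 1 + 1 - s = 2 := by omega
            have e7 : s + 1 - s = 1 := by omega
            have e8 : s - s = 0 := by omega
            have e9 : s - 1 - s = 0 := by omega
            rw [e6, e7, e8, e9]
            simp [Nat.fib_one, Nat.fib_two]
        rw [hsplit, Finset.sum_add_distrib]
        have hlast : ∑ s ∈ Finset.range (j+1), (-1 : ℝ) ^ (j - 1 - s) * (Nat.fib (j - s) : ℝ) * X (s+1)
            = ∑ s ∈ Finset.range j, (-1 : ℝ) ^ (j - 1 - s) * (Nat.fib (j - s) : ℝ) * X (s+1) := by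
          rw [Finset.sum_range_succ]
          simp [Nat.sub_self]
        have hneg : ∑ s ∈ Finset.range (j+1),
              (-((-1 : ℝ) ^ (j - s) * (Nat.fib (j + 1 - s) : ℝ) * X (s+1)))
            = -∑ s ∈ Finset.range (j+1), (-1 : ℝ) ^ (j - s) * (Nat.fib (j + 1 - s) : ℝ) * X (s+1) := by
          rw [← Finset.sum_neg_distrib]
        rw [hlast, hneg]
        ring
  exact fun i => (key i).1



lemma Xval (X : ℕ → ℝ) (k : ℕ) : X (k+1) = zs X (k+2) + zs X (k+1) - zs X k := by
  rw [zs_rec]; ring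

lemma sum_ident (X : ℕ → ℝ) (j : ℕ) :
    ∑ i ∈ Finset.range (j+1), (4 * (X (i+1))^2 - 5 * (zs X (i+2) - zs X i)^2)
      = ∑ k ∈ Finset.range j, (zs X (k+1) + zs X (k+3))^2 + (zs X 2)^2
        + 2 * (zs X (j+1))^2 - 2 * (zs X (j+2))^2 + 8 * zs X (j+1) * zs X (j+2) := by
  induction j with
  | zero =>
    simp only [Nat.zero_add, Finset.range_one, Finset.sum_singleton, Finset.range_zero,
      Finset.sum_empty, Nat.zero_add]
    norm_num
    rw [Xval X 0, zs_zero, zs_one]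
    ring
  | succ m ih =>
    rw [Finset.sum_range_succ, ih, Finset.sum_range_succ, Xval X (m+1)]
    simp only [show m+1+2 = m+3 from by omega, show m+1+1 = m+2 from by omega]
    ring

lemma keyform (n : ℕ) (hn : 2 ≤ n) :
    ∃ w : Fin n → ℝ, ∀ x : Fin n → ℝ, x ≠ 0 → w ⬝ᵥ x = 0 →
      5 * (x ⬝ᵥ (Z n *ᵥ x)) < 4 * (x ⬝ᵥ x) := by
  refine ⟨fun k => (-1 : ℝ) ^ (n - 1 - k.1) * (Nat.fib (n - k.1) : ℝ), ?_⟩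
  intro x hx hwx
  -- extended coordinates
  set X : ℕ → ℝ := fun m => if h : 1 ≤ m ∧ m ≤ n then x ⟨m - 1, by omega⟩ else 0 with hXdef
  have hXx : ∀ k : Fin n, X (k.1 + 1) = x k := by
    intro k
    have h : 1 ≤ k.1 + 1 ∧ k.1 + 1 ≤ n := ⟨by omega, k.2⟩
    rw [hXdef]
    simp only [dif_pos h, Nat.add_sub_cancel]
  -- the constraint says zs X (n+1) = 0
  have hzn : zs X (n + 1) = 0 := by
    rw [zs_formula X n, ← hwx]
    rw [dotProduct]
    rw [← Fin.sum_univ_eq_sum_range (fun s => (-1 : ℝ) ^ (n - 1 - s) * (Nat.fib (n - s) : ℝ) * X (s+1)) n]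
    exact Finset.sum_congr rfl fun k _ => by rw [hXx k]
  -- |x|^2
  have hnorm : x ⬝ᵥ x = ∑ i ∈ Finset.range n, (X (i+1))^2 := by
    rw [dotProduct,
      ← Fin.sum_univ_eq_sum_range (fun i => (X (i+1))^2) n]
    exact Finset.sum_congr rfl fun k _ => by rw [← hXx k]; ring
  -- G *ᵥ x
  have hGx : ∀ k : Fin n, (Gm n *ᵥ x) k = zs X (k.1 + 2) - zs X k.1 := by
    intro k
    have h1 : (Gm n *ᵥ x) k = ∑ j ∈ Finset.range n, gnat k.1 j * X (j+1) := by
      rw [Matrix.mulVec, dotProduct,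
        ← Fin.sum_univ_eq_sum_range (fun j => gnat k.1 j * X (j+1)) n]
      exact Finset.sum_congr rfl fun j _ => by rw [hXx j]; rfl
    have hkn : k.1 + 1 ≤ n := k.2
    rw [h1, ← Finset.sum_range_add_sum_Ico _ hkn]
    have h2 : ∑ j ∈ Finset.Ico (k.1+1) n, gnat k.1 j * X (j+1) = 0 := by
      refine Finset.sum_eq_zero fun j hj => ?_
      rw [Finset.mem_Ico] at hj
      rw [gnat_gt (by omega), zero_mul]
    rw [h2, add_zero, Finset.sum_range_succ, gnat_eq, one_mul]
    have h3 : ∑ j ∈ Finset.range k.1, gnat k.1 j * X (j+1) = - zs X (k.1 + 1) := by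
      rw [zs_formula X k.1, ← Finset.sum_neg_distrib]
      refine Finset.sum_congr rfl fun j hj => ?_
      rw [Finset.mem_range] at hj
      rw [gnat_lt hj]
      have e : k.1 - j = (k.1 - 1 - j) + 1 := by omega
      rw [e, pow_succ]
      ring
    rw [h3, zs_rec]
    ring
  -- quadratic form
  have hform : x ⬝ᵥ (Z n *ᵥ x) = ∑ i ∈ Finset.range n, (zs X (i+2) - zs X i)^2 := by
    rw [ZGG n, ← Matrix.mulVec_mulVec, dotProduct_mulVec, Matrix.vecMul_transpose,
      dotProduct, ← Fin.sum_univ_eq_sum_range (fun i => (zs X (i+2) - zs X i)^2) n]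
    refine Finset.sum_congr rfl fun k _ => by rw [hGx k]; ring
  -- the identity
  obtain ⟨j, hj⟩ : ∃ j, n = j + 1 := ⟨n - 1, by omega⟩
  have hid := sum_ident X j
  rw [← hj] at hid
  have hjn1 : j + 2 = n + 1 := by omega
  rw [hjn1, hzn] at hid
  have hSsum : ∑ i ∈ Finset.range n, (4 * (X (i+1))^2 - 5 * (zs X (i+2) - zs X i)^2)
      = ∑ k ∈ Finset.range j, (zs X (k+1) + zs X (k+3))^2 + (zs X 2)^2 + 2 * (zs X n)^2 := by
    rw [hid]; ring
  have hsplit : ∑ i ∈ Finset.range n, (4 * (X (i+1))^2 - 5 * (zs X (i+2) - zs X i)^2)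
      = 4 * (x ⬝ᵥ x) - 5 * (x ⬝ᵥ (Z n *ᵥ x)) := by
    rw [hnorm, hform, Finset.mul_sum, Finset.mul_sum, ← Finset.sum_sub_distrib]
  -- suppose not
  by_contra hcon
  push_neg at hcon
  have hS0 : ∑ k ∈ Finset.range j, (zs X (k+1) + zs X (k+3))^2 + (zs X 2)^2 + 2 * (zs X n)^2 ≤ 0 := by
    rw [← hSsum, hsplit]; linarith
  have hsq1 : (0:ℝ) ≤ ∑ k ∈ Finset.range j, (zs X (k+1) + zs X (k+3))^2 :=
    Finset.sum_nonneg fun k _ => sq_nonneg _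
  have hsq2 : (0:ℝ) ≤ (zs X 2)^2 := sq_nonneg _
  have hsq3 : (0:ℝ) ≤ (zs X n)^2 := sq_nonneg _
  have hz2 : zs X 2 = 0 := by
    have : (zs X 2)^2 = 0 := by linarith
    exact pow_eq_zero_iff (by norm_num) |>.mp this
  have hsum0 : ∑ k ∈ Finset.range j, (zs X (k+1) + zs X (k+3))^2 = 0 := by linarith
  have hpair : ∀ k ∈ Finset.range j, (zs X (k+1) + zs X (k+3))^2 = 0 :=
    (Finset.sum_eq_zero_iff_of_nonneg fun k _ => sq_nonneg _).mp hsum0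
  -- all zs vanish up to n+1
  have hzall : ∀ m, m ≤ n + 1 → zs X m = 0 := by
    intro m
    induction m using Nat.strong_induction_on with
    | _ m ih =>
      intro hm
      match m with
      | 0 => exact zs_zero X
      | 1 => exact zs_one X
      | 2 => exact hz2
      | (k+3) =>
        have hk : k ∈ Finset.range j := Finset.mem_range.mpr (by omega)
        have h0 := hpair k hk
        have h1 : zs X (k+1) + zs X (k+3) = 0 :=
          pow_eq_zero_iff (by norm_num) |>.mp h0
        have h2 : zs X (k+1) = 0 := ih (k+1) (by omega) (by omega)
        linarith
  -- then x = 0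
  apply hx
  funext k
  have h1 : X (k.1 + 1) = zs X (k.1+2) + zs X (k.1+1) - zs X k.1 := by rw [zs_rec]; ring
  have h2 : zs X (k.1+2) = 0 := hzall _ (by have := k.2; omega)
  have h3 : zs X (k.1+1) = 0 := hzall _ (by have := k.2; omega)
  have h4 : zs X k.1 = 0 := hzall _ (by have := k.2; omega)
  have : X (k.1 + 1) = 0 := by rw [h1, h2, h3, h4]; ring
  rw [← hXx k, this]
  rfl

lemma roots_eq (n : ℕ) :
    (Z n).charpoly.roots = Finset.univ.val.map (Zherm n).eigenvalues := by
  have hherm := Zherm n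
  have hsp := hherm.spectral_theorem
  have hU : (hherm.eigenvectorUnitary : Matrix (Fin n) (Fin n) ℝ) *
      star (hherm.eigenvectorUnitary : Matrix (Fin n) (Fin n) ℝ) = 1 :=
    Matrix.mem_unitaryGroup_iff.mp hherm.eigenvectorUnitary.2
  have h1 : (Z n).charpoly
      = (Matrix.diagonal (RCLike.ofReal ∘ hherm.eigenvalues) : Matrix (Fin n) (Fin n) ℝ).charpoly := by
    conv_lhs => rw [hsp]
    exact charpoly_conj _ _ _ hU
  have h2 : (Matrix.diagonal (RCLike.ofReal ∘ hherm.eigenvalues) : Matrix (Fin n) (Fin n) ℝ).charpoly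
      = ∏ i : Fin n, (X - C (hherm.eigenvalues i)) := by
    rw [Matrix.charpoly_of_upperTriangular _ (Matrix.blockTriangular_diagonal _)]
    refine Finset.prod_congr rfl fun i _ => ?_
    rw [Matrix.diagonal_apply_eq]
    norm_num
  rw [h1, h2]
  have h3 : ∏ i : Fin n, (X - C (hherm.eigenvalues i))
      = ((Finset.univ.val.map hherm.eigenvalues).map fun a => X - C a).prod := by
    rw [Finset.prod_eq_multiset_prod, Multiset.map_map]
    rfl
  rw [h3, Polynomial.roots_multiset_prod_X_sub_C]

theorem stmt_10 (n : ℕ) (hn : 2 ≤ n) (l : List ℝ)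
    (hlen : l.length = n)
    (hsorted : l.Pairwise (· ≥ ·))
    (hroots : (l : Multiset ℝ) = (Z n).charpoly.roots) :
    l.get ⟨1, by omega⟩ < 4 / 5 := by
  by_contra hcon
  push_neg at hcon
  rw [roots_eq n] at hroots
  rcases l with _ | ⟨a, l'⟩
  · simp at hlen; omega
  rcases l' with _ | ⟨b, t⟩
  · simp at hlen; omega
  have hb : 4/5 ≤ b := by simpa using hcon
  have hba : b ≤ a := List.rel_of_pairwise_cons hsorted (by simp : b ∈ b :: t)
  have ha : 4/5 ≤ a := le_trans hb hba
  set p : ℝ → Prop := fun r => 4/5 ≤ r with hp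
  have hcount : 2 ≤ Multiset.countP p ((a :: b :: t : List ℝ) : Multiset ℝ) := by
    have he : ((a :: b :: t : List ℝ) : Multiset ℝ) = a ::ₘ b ::ₘ (t : Multiset ℝ) := rfl
    rw [he, Multiset.countP_cons_of_pos _ ha, Multiset.countP_cons_of_pos _ hb]
    omega
  rw [hroots, Multiset.countP_map] at hcount
  have hcard : 1 < (Finset.filter (fun i => p ((Zherm n).eigenvalues i)) Finset.univ).card := by
    rw [Finset.card, Finset.filter_val]
    omega
  obtain ⟨i, hi, jj, hjj, hij⟩ := Finset.one_lt_card.mp hcard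
  rw [Finset.mem_filter] at hi hjj
  have hli : 4/5 ≤ (Zherm n).eigenvalues i := hi.2
  have hlj : 4/5 ≤ (Zherm n).eigenvalues jj := hjj.2
  obtain ⟨w, hw⟩ := keyform n hn
  set v₁ : Fin n → ℝ := ⇑((Zherm n).eigenvectorBasis i) with hv₁
  set v₂ : Fin n → ℝ := ⇑((Zherm n).eigenvectorBasis jj) with hv₂
  have hm1 : Z n *ᵥ v₁ = (Zherm n).eigenvalues i • v₁ := (Zherm n).mulVec_eigenvectorBasis i
  have hm2 : Z n *ᵥ v₂ = (Zherm n).eigenvalues jj • v₂ := (Zherm n).mulVec_eigenvectorBasis jj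
  have hdot : ∀ y z : EuclideanSpace ℝ (Fin n), (inner ℝ y z : ℝ) = ⇑y ⬝ᵥ ⇑z := by
    intro y z
    simp [PiLp.inner_apply, RCLike.inner_apply, dotProduct, starRingEnd_apply, mul_comm]
  have horth := orthonormal_iff_ite.mp (Zherm n).eigenvectorBasis.orthonormal
  have h11 : v₁ ⬝ᵥ v₁ = 1 := by rw [← hdot]; rw [horth i i]; simp
  have h22 : v₂ ⬝ᵥ v₂ = 1 := by rw [← hdot]; rw [horth jj jj]; simp
  have h12 : v₁ ⬝ᵥ v₂ = 0 := by rw [← hdot]; rw [horth i jj]; simp [hij]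
  have h21 : v₂ ⬝ᵥ v₁ = 0 := by rw [← hdot]; rw [horth jj i]; simp [Ne.symm hij]
  have main : ∀ c d : ℝ, ¬(c = 0 ∧ d = 0) → w ⬝ᵥ (c • v₁ + d • v₂) = 0 → False := by
    intro c d hcd hwx
    set x : Fin n → ℝ := c • v₁ + d • v₂ with hxdef
    have hxx : x ⬝ᵥ x = c^2 + d^2 := by
      rw [hxdef]
      simp only [add_dotProduct, dotProduct_add, smul_dotProduct,
        dotProduct_smul, h11, h22, h12, h21]
      simp [smul_eq_mul]; ring
    have hxne : x ≠ 0 := by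
      intro h0
      rw [h0] at hxx
      simp [dotProduct] at hxx
      rcases not_and_or.mp hcd with h | h
      · have hc2 : 0 < c^2 := lt_of_le_of_ne (sq_nonneg c) (Ne.symm (pow_ne_zero 2 h))
        linarith [sq_nonneg d]
      · have hd2 : 0 < d^2 := lt_of_le_of_ne (sq_nonneg d) (Ne.symm (pow_ne_zero 2 h))
        linarith [sq_nonneg c]
    have hZx : x ⬝ᵥ (Z n *ᵥ x) = c^2 * (Zherm n).eigenvalues i + d^2 * (Zherm n).eigenvalues jj := by
      rw [hxdef]
      rw [Matrix.mulVec_add, Matrix.mulVec_smul, Matrix.mulVec_smul, hm1, hm2]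
      simp only [add_dotProduct, dotProduct_add, smul_dotProduct,
        dotProduct_smul, h11, h22, h12, h21]
      simp [smul_eq_mul]; ring
    have hcontr := hw x hxne hwx
    rw [hZx, hxx] at hcontr
    nlinarith [sq_nonneg c, sq_nonneg d]
  rcases eq_or_ne (w ⬝ᵥ v₁) 0 with hwv1 | hwv1
  · refine main 1 0 (by simp) ?_
    simp [dotProduct_add, dotProduct_smul, hwv1]
  · refine main (w ⬝ᵥ v₂) (-(w ⬝ᵥ v₁)) (by simp [hwv1]) ?_
    simp only [dotProduct_add, dotProduct_smul, smul_eq_mul]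
    ring
end
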